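/- arXiv:quant-ph/0010032 — 4 statements merged into one kernel-verified Lean document; each statement's English description precedes it below -/
import Mathlib

section
/- Let ρ(t) = U(t) ρ_0 U(t)† where U(t) is unitary for each t and ρ_0 = ρ_1 ⊕ ρ_2 is block-diagonal with respect to an orthogonal decomposition ℂ^N = H_1 ⊕ H_2, and suppose U(t) is also block-diagonal with respect to this decomposition for each t. If A is Hermitian with restricted observables A_i = P_i A P_i having eigenvalues λ_1^{(i)} ≥ ... ≥ λ_{N_i}^{(i)}, and ρ_i has eigenvalues w_1^{(i)} ≥ ... ≥ w_{N_i}^{(i)}, then trace(A ρ(t)) ≤ Σ_{n=1}^{N_1} w_n^{(1)} λ_n^{(1)} + Σ_{n=1}^{N_2} w_n^{(2)} λ_n^{(2)}. -/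
open Matrix
open scoped ComplexOrder

lemma trace_fromBlocks' {m n : Type*} [Fintype m] [Fintype n] {α : Type*} [AddCommMonoid α]
    (B : Matrix m m α) (C : Matrix m n α) (D : Matrix n m α) (E : Matrix n n α) :
    (fromBlocks B C D E).trace = B.trace + E.trace := by
  simp [Matrix.trace, Fintype.sum_sum_type, fromBlocks]

lemma ds_ineq {N : ℕ} (lam w : Fin N → ℝ) (hlam : Antitone lam) (hw : Antitone w)
    (B : Matrix (Fin N) (Fin N) ℝ) (hB : B ∈ doublyStochastic ℝ (Fin N)) :
    ∑ i, ∑ j, lam i * B i j * w j ≤ ∑ n, w n * lam n := by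
  obtain ⟨c, hc0, hc1, hcB⟩ := exists_eq_sum_perm_of_mem_doublyStochastic hB
  have hBij : ∀ i j, B i j = ∑ σ : Equiv.Perm (Fin N), if σ i = j then c σ else 0 := by
    intro i j
    rw [← hcB]
    simp [Matrix.sum_apply, Equiv.Perm.permMatrix, PEquiv.toMatrix_apply,
      Equiv.toPEquiv_apply, mul_ite, mul_one, mul_zero]
  have e1 : ∀ i j, lam i * B i j * w j
      = ∑ σ : Equiv.Perm (Fin N), (if σ i = j then c σ * (lam i * w (σ i)) else 0) := by
    intro i j
    rw [hBij, Finset.mul_sum, Finset.sum_mul]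
    refine Finset.sum_congr rfl fun σ _ => ?_
    by_cases h : σ i = j
    · subst h; rw [if_pos rfl, if_pos rfl]; ring
    · rw [if_neg h, if_neg h]; ring
  have key : ∑ i, ∑ j, lam i * B i j * w j
      = ∑ σ : Equiv.Perm (Fin N), c σ * ∑ i, lam i * w (σ i) := by
    calc ∑ i, ∑ j, lam i * B i j * w j
        = ∑ i, ∑ σ : Equiv.Perm (Fin N), ∑ j,
            (if σ i = j then c σ * (lam i * w (σ i)) else 0) := by
          simp_rw [e1]; exact Finset.sum_congr rfl fun i _ => Finset.sum_comm
      _ = ∑ σ : Equiv.Perm (Fin N), ∑ i, c σ * (lam i * w (σ i)) := by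
          rw [Finset.sum_comm]
          refine Finset.sum_congr rfl fun σ _ => Finset.sum_congr rfl fun i _ => ?_
          simp
      _ = ∑ σ : Equiv.Perm (Fin N), c σ * ∑ i, lam i * w (σ i) := by
          simp_rw [Finset.mul_sum]
  rw [key]
  calc ∑ σ : Equiv.Perm (Fin N), c σ * ∑ i, lam i * w (σ i)
      ≤ ∑ σ : Equiv.Perm (Fin N), c σ * ∑ i, lam i * w i := by
        refine Finset.sum_le_sum fun σ _ => mul_le_mul_of_nonneg_left ?_ (hc0 σ)
        simpa [smul_eq_mul] using (hlam.monovary hw).sum_smul_comp_perm_le_sum_smul (σ := σ)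
    _ = ∑ n, w n * lam n := by
        rw [← Finset.sum_mul, hc1, one_mul]
        exact Finset.sum_congr rfl fun i _ => mul_comm _ _

lemma block_bound {N : ℕ} (lam w : Fin N → ℝ) (hlam : Antitone lam) (hw : Antitone w)
    (hw0 : ∀ k, 0 ≤ w k) (V W : Matrix (Fin N) (Fin N) ℂ)
    (hV : V ∈ Matrix.unitaryGroup (Fin N) ℂ) (hW : W ∈ Matrix.unitaryGroup (Fin N) ℂ) :
    (V * Matrix.diagonal (fun k => (lam k : ℂ)) * Vᴴ *
      (W * Matrix.diagonal (fun k => (w k : ℂ)) * Wᴴ)).trace ≤ ((∑ n, w n * lam n : ℝ) : ℂ) := by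
  set M := Vᴴ * W with hM
  have hMu : M ∈ Matrix.unitaryGroup (Fin N) ℂ := mul_mem (Unitary.star_mem hV) hW
  have hMMH : M * Mᴴ = 1 := by
    simpa [Matrix.star_eq_conjTranspose] using (Matrix.mem_unitaryGroup_iff).mp hMu
  have hMHM : Mᴴ * M = 1 := by
    simpa [Matrix.star_eq_conjTranspose] using (Matrix.mem_unitaryGroup_iff').mp hMu
  set B : Matrix (Fin N) (Fin N) ℝ := fun i j => Complex.normSq (M i j) with hB
  have hrow : ∀ i, ∑ j, B i j = 1 := by
    intro i
    have h1 : ∑ j, M i j * (starRingEnd ℂ) (M i j) = 1 := by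
      have := congrArg (fun X => X i i) hMMH
      simpa [Matrix.mul_apply, Matrix.conjTranspose_apply, Complex.star_def] using this
    have h2 : ((∑ j, B i j : ℝ) : ℂ) = 1 := by
      rw [← h1]; push_cast
      exact Finset.sum_congr rfl fun j _ => (Complex.mul_conj _).symm
    exact_mod_cast h2
  have hcol : ∀ j, ∑ i, B i j = 1 := by
    intro j
    have h1 : ∑ i, (starRingEnd ℂ) (M i j) * M i j = 1 := by
      have := congrArg (fun X => X j j) hMHM
      simpa [Matrix.mul_apply, Matrix.conjTranspose_apply, Complex.star_def] using this
    have h2 : ((∑ i, B i j : ℝ) : ℂ) = 1 := by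
      rw [← h1]; push_cast
      exact Finset.sum_congr rfl fun i _ => by rw [mul_comm]; exact (Complex.mul_conj _).symm
    exact_mod_cast h2
  have hBds : B ∈ doublyStochastic ℝ (Fin N) := by
    rw [mem_doublyStochastic_iff_sum]
    exact ⟨fun i j => Complex.normSq_nonneg _, hrow, hcol⟩
  have hMH : Wᴴ * V = Mᴴ := by
    rw [hM, Matrix.conjTranspose_mul, Matrix.conjTranspose_conjTranspose]
  have key : V * Matrix.diagonal (fun k => (lam k : ℂ)) * Vᴴ *
      (W * Matrix.diagonal (fun k => (w k : ℂ)) * Wᴴ)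
      = V * (Matrix.diagonal (fun k => (lam k : ℂ)) *
          (M * (Matrix.diagonal (fun k => (w k : ℂ)) * Wᴴ))) := by
    rw [hM]; simp only [Matrix.mul_assoc]
  have htr : (V * Matrix.diagonal (fun k => (lam k : ℂ)) * Vᴴ *
      (W * Matrix.diagonal (fun k => (w k : ℂ)) * Wᴴ)).trace
      = ((∑ i, ∑ j, lam i * B i j * w j : ℝ) : ℂ) := by
    rw [key, Matrix.trace_mul_comm]
    have key2 : Matrix.diagonal (fun k => (lam k : ℂ)) *
        (M * (Matrix.diagonal (fun k => (w k : ℂ)) * Wᴴ)) * V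
        = Matrix.diagonal (fun k => (lam k : ℂ)) *
          (M * (Matrix.diagonal (fun k => (w k : ℂ)) * Mᴴ)) := by
      rw [← hMH]; simp only [Matrix.mul_assoc]
    rw [key2, Matrix.trace]
    push_cast
    refine Finset.sum_congr rfl fun i _ => ?_
    rw [Matrix.diag_apply, Matrix.diagonal_mul, Matrix.mul_apply, Finset.mul_sum]
    refine Finset.sum_congr rfl fun j _ => ?_
    rw [Matrix.diagonal_mul, Matrix.conjTranspose_apply, Complex.star_def]
    have hz : ((B i j : ℝ) : ℂ) = M i j * (starRingEnd ℂ) (M i j) := (Complex.mul_conj _).symm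
    rw [show ((lam i : ℂ) * ((B i j : ℝ) : ℂ) * (w j : ℂ))
        = (lam i : ℂ) * (M i j * ((w j : ℂ) * (starRingEnd ℂ) (M i j))) from by rw [hz]; ring]
  rw [htr]
  exact Complex.real_le_real.mpr (ds_ineq lam w hlam hw B hBds)

lemma diag_nonneg_aux {N : ℕ} {w : Fin N → ℝ}
    (h : (Matrix.diagonal (fun k => (w k : ℂ))).PosSemidef) : ∀ k, 0 ≤ w k := by
  intro k
  have := Matrix.posSemidef_diagonal_iff.mp h k
  exact_mod_cast this

/-- Improved kinematical upper bound for decoupled systems: if the initial state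
and the evolution are block-diagonal w.r.t. `ℂ^N = ℂ^{N₁} ⊕ ℂ^{N₂}`, then the
expectation value of `A` is bounded by the sum of the subspace bounds. -/
theorem decoupled_upper_bound {N1 N2 : ℕ}
    (A : Matrix (Fin N1 ⊕ Fin N2) (Fin N1 ⊕ Fin N2) ℂ) (hA : A.IsHermitian)
    (ρ1 : Matrix (Fin N1) (Fin N1) ℂ) (ρ2 : Matrix (Fin N2) (Fin N2) ℂ)
    (hρ : (Matrix.fromBlocks ρ1 0 0 ρ2).PosSemidef)
    (hρtr : (Matrix.fromBlocks ρ1 0 0 ρ2).trace = 1)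
    (w1 lam1 : Fin N1 → ℝ) (w2 lam2 : Fin N2 → ℝ)
    (hw1 : Antitone w1) (hw2 : Antitone w2)
    (hlam1 : Antitone lam1) (hlam2 : Antitone lam2)
    -- eigenvalue decompositions of ρ₁, ρ₂ and of the restricted observables A₁, A₂
    (W1 : Matrix (Fin N1) (Fin N1) ℂ) (hW1 : W1 ∈ Matrix.unitaryGroup (Fin N1) ℂ)
    (hρ1eig : ρ1 = W1 * Matrix.diagonal (fun k => (w1 k : ℂ)) * W1ᴴ)
    (W2 : Matrix (Fin N2) (Fin N2) ℂ) (hW2 : W2 ∈ Matrix.unitaryGroup (Fin N2) ℂ)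
    (hρ2eig : ρ2 = W2 * Matrix.diagonal (fun k => (w2 k : ℂ)) * W2ᴴ)
    (V1 : Matrix (Fin N1) (Fin N1) ℂ) (hV1 : V1 ∈ Matrix.unitaryGroup (Fin N1) ℂ)
    (hA1eig : A.toBlocks₁₁ = V1 * Matrix.diagonal (fun k => (lam1 k : ℂ)) * V1ᴴ)
    (V2 : Matrix (Fin N2) (Fin N2) ℂ) (hV2 : V2 ∈ Matrix.unitaryGroup (Fin N2) ℂ)
    (hA2eig : A.toBlocks₂₂ = V2 * Matrix.diagonal (fun k => (lam2 k : ℂ)) * V2ᴴ)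
    -- block-diagonal unitary evolution
    (U1 : Matrix (Fin N1) (Fin N1) ℂ) (hU1 : U1 ∈ Matrix.unitaryGroup (Fin N1) ℂ)
    (U2 : Matrix (Fin N2) (Fin N2) ℂ) (hU2 : U2 ∈ Matrix.unitaryGroup (Fin N2) ℂ) :
    (A * (Matrix.fromBlocks U1 0 0 U2 * Matrix.fromBlocks ρ1 0 0 ρ2 *
        (Matrix.fromBlocks U1 0 0 U2)ᴴ)).trace ≤
      ((∑ n, w1 n * lam1 n + ∑ n, w2 n * lam2 n : ℝ) : ℂ) := by
  have hρ1psd : ρ1.PosSemidef := by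
    have := hρ.submatrix (Sum.inl : Fin N1 → Fin N1 ⊕ Fin N2)
    simp [Matrix.submatrix, Matrix.fromBlocks] at this; exact this
  have hρ2psd : ρ2.PosSemidef := by
    have := hρ.submatrix (Sum.inr : Fin N2 → Fin N1 ⊕ Fin N2)
    simp [Matrix.submatrix, Matrix.fromBlocks] at this; exact this
  have hw1nn : ∀ k, 0 ≤ w1 k := by
    apply diag_nonneg_aux
    have key := hρ1psd.conjTranspose_mul_mul_same W1
    rw [hρ1eig] at key
    have e : W1ᴴ * (W1 * Matrix.diagonal (fun k => (w1 k : ℂ)) * W1ᴴ) * W1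
        = Matrix.diagonal (fun k => (w1 k : ℂ)) := by
      have h1 : W1ᴴ * W1 = 1 := by
        simpa [Matrix.star_eq_conjTranspose] using (Matrix.mem_unitaryGroup_iff').mp hW1
      calc W1ᴴ * (W1 * Matrix.diagonal (fun k => (w1 k : ℂ)) * W1ᴴ) * W1
          = (W1ᴴ * W1) * Matrix.diagonal (fun k => (w1 k : ℂ)) * (W1ᴴ * W1) := by
            simp only [Matrix.mul_assoc]
        _ = Matrix.diagonal (fun k => (w1 k : ℂ)) := by rw [h1]; simp
    rwa [e] at key
  have hw2nn : ∀ k, 0 ≤ w2 k := by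
    apply diag_nonneg_aux
    have key := hρ2psd.conjTranspose_mul_mul_same W2
    rw [hρ2eig] at key
    have e : W2ᴴ * (W2 * Matrix.diagonal (fun k => (w2 k : ℂ)) * W2ᴴ) * W2
        = Matrix.diagonal (fun k => (w2 k : ℂ)) := by
      have h1 : W2ᴴ * W2 = 1 := by
        simpa [Matrix.star_eq_conjTranspose] using (Matrix.mem_unitaryGroup_iff').mp hW2
      calc W2ᴴ * (W2 * Matrix.diagonal (fun k => (w2 k : ℂ)) * W2ᴴ) * W2
          = (W2ᴴ * W2) * Matrix.diagonal (fun k => (w2 k : ℂ)) * (W2ᴴ * W2) := by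
            simp only [Matrix.mul_assoc]
        _ = Matrix.diagonal (fun k => (w2 k : ℂ)) := by rw [h1]; simp
    rwa [e] at key
  have hAblocks : A = Matrix.fromBlocks A.toBlocks₁₁ A.toBlocks₁₂ A.toBlocks₂₁ A.toBlocks₂₂ :=
    (Matrix.fromBlocks_toBlocks A).symm
  have hsplit : (A * (Matrix.fromBlocks U1 0 0 U2 * Matrix.fromBlocks ρ1 0 0 ρ2 *
        (Matrix.fromBlocks U1 0 0 U2)ᴴ)).trace
      = (A.toBlocks₁₁ * (U1 * ρ1 * U1ᴴ)).trace + (A.toBlocks₂₂ * (U2 * ρ2 * U2ᴴ)).trace := by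
    conv_lhs => rw [hAblocks]
    rw [Matrix.fromBlocks_conjTranspose]
    simp only [Matrix.fromBlocks_multiply, Matrix.mul_zero, Matrix.zero_mul,
      add_zero, zero_add, Matrix.conjTranspose_zero, trace_fromBlocks', Matrix.mul_assoc]
  rw [hsplit]
  have h1 : (A.toBlocks₁₁ * (U1 * ρ1 * U1ᴴ)).trace ≤ ((∑ n, w1 n * lam1 n : ℝ) : ℂ) := by
    have e : U1 * ρ1 * U1ᴴ = (U1 * W1) * Matrix.diagonal (fun k => (w1 k : ℂ)) * (U1 * W1)ᴴ := by
      rw [hρ1eig, Matrix.conjTranspose_mul]; simp only [Matrix.mul_assoc]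
    rw [hA1eig, e]
    exact block_bound lam1 w1 hlam1 hw1 hw1nn V1 (U1 * W1) hV1 (mul_mem hU1 hW1)
  have h2 : (A.toBlocks₂₂ * (U2 * ρ2 * U2ᴴ)).trace ≤ ((∑ n, w2 n * lam2 n : ℝ) : ℂ) := by
    have e : U2 * ρ2 * U2ᴴ = (U2 * W2) * Matrix.diagonal (fun k => (w2 k : ℂ)) * (U2 * W2)ᴴ := by
      rw [hρ2eig, Matrix.conjTranspose_mul]; simp only [Matrix.mul_assoc]
    rw [hA2eig, e]
    exact block_bound lam2 w2 hlam2 hw2 hw2nn V2 (U2 * W2) hV2 (mul_mem hU2 hW2)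
  calc (A.toBlocks₁₁ * (U1 * ρ1 * U1ᴴ)).trace + (A.toBlocks₂₂ * (U2 * ρ2 * U2ᴴ)).trace
      ≤ ((∑ n, w1 n * lam1 n : ℝ) : ℂ) + ((∑ n, w2 n * lam2 n : ℝ) : ℂ) := add_le_add h1 h2
    _ = _ := by push_cast; ring
end

section
/- Consider the 4×4 matrices H_0 = diag(0.5, 1.5, 2.5, 3.5) and V the tridiagonal matrix with all super- and sub-diagonal entries equal to 1 and zero diagonal. The real Lie algebra generated by iH_0 and iV inside u(4) (the skew-Hermitian 4×4 matrices) has dimension strictly less than 16; in particular the system (H_0, V) is not completely controllable. -/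
open Matrix

attribute [local instance 100] LieRing.ofAssociativeRing

def Scond (X : Matrix (Fin 4) (Fin 4) ℂ) : Prop :=
  star (X 0 0) = -X 0 0 ∧ star (X 1 1) = -X 1 1 ∧ star (X 2 2) = -X 2 2 ∧
  X 3 3 = X 1 1 + X 2 2 - X 0 0 ∧
  X 1 0 = -star (X 0 1) ∧ X 2 0 = -star (X 0 2) ∧ X 3 0 = -star (X 0 3) ∧
  X 2 1 = -star (X 1 2) ∧ X 1 3 = -X 0 2 ∧ X 2 3 = X 0 1 ∧
  X 3 1 = star (X 0 2) ∧ X 3 2 = -star (X 0 1)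

def S : LieSubalgebra ℝ (Matrix (Fin 4) (Fin 4) ℂ) where
  carrier := {X | Scond X}
  add_mem' := by
    rintro X Y ⟨h1,h2,h3,h4,h5,h6,h7,h8,h9,h10,h11,h12⟩
      ⟨g1,g2,g3,g4,g5,g6,g7,g8,g9,g10,g11,g12⟩
    refine ⟨?_,?_,?_,?_,?_,?_,?_,?_,?_,?_,?_,?_⟩ <;>
      simp [Matrix.add_apply, star_add, h1,h2,h3,h4,h5,h6,h7,h8,h9,h10,h11,h12,
        g1,g2,g3,g4,g5,g6,g7,g8,g9,g10,g11,g12] <;> ring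
  smul_mem' := by
    rintro c X ⟨h1,h2,h3,h4,h5,h6,h7,h8,h9,h10,h11,h12⟩
    refine ⟨?_,?_,?_,?_,?_,?_,?_,?_,?_,?_,?_,?_⟩ <;>
      simp [Matrix.smul_apply, star_smul, h1,h2,h3,h4,h5,h6,h7,h8,h9,h10,h11,h12,
        smul_add, smul_sub]
  zero_mem' := by
    refine ⟨?_,?_,?_,?_,?_,?_,?_,?_,?_,?_,?_,?_⟩ <;> simp
  lie_mem' := by
    rintro X Y ⟨h1,h2,h3,h4,h5,h6,h7,h8,h9,h10,h11,h12⟩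
      ⟨g1,g2,g3,g4,g5,g6,g7,g8,g9,g10,g11,g12⟩
    refine ⟨?_,?_,?_,?_,?_,?_,?_,?_,?_,?_,?_,?_⟩ <;>
      simp only [Ring.lie_def, Matrix.sub_apply, Matrix.mul_apply, Fin.sum_univ_four,
        h4,h5,h6,h7,h8,h9,h10,h11,h12, g4,g5,g6,g7,g8,g9,g10,g11,g12,
        star_add, star_sub, star_mul', star_neg, star_star, h1,h2,h3, g1,g2,g3] <;>
      ring

def idx7 : Fin 7 → Fin 4 × Fin 4
  | 0 => (0,0) | 1 => (1,1) | 2 => (2,2) | 3 => (0,1)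
  | 4 => (0,2) | 5 => (0,3) | 6 => (1,2)

noncomputable def phiS : Matrix (Fin 4) (Fin 4) ℂ →ₗ[ℝ] (Fin 7 → ℂ) where
  toFun X := fun i => X (idx7 i).1 (idx7 i).2
  map_add' X Y := by funext i; simp
  map_smul' c X := by funext i; simp

/-- The modified four-level harmonic oscillator with all transition moments
equal to 1 is not completely controllable: the real Lie algebra generated by
`iH₀` and `iV` has dimension strictly less than `16 = dim u(4)`. -/
theorem modified_oscillator_not_controllable :
    let H0 : Matrix (Fin 4) (Fin 4) ℂ := Matrix.diagonal ![0.5, 1.5, 2.5, 3.5]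
    let V : Matrix (Fin 4) (Fin 4) ℂ :=
      !![0, 1, 0, 0; 1, 0, 1, 0; 0, 1, 0, 1; 0, 0, 1, 0]
    Module.finrank ℝ
      (LieSubalgebra.lieSpan ℝ (Matrix (Fin 4) (Fin 4) ℂ)
        {Complex.I • H0, Complex.I • V}) < 16 := by
  intro H0 V
  have hsub : LieSubalgebra.lieSpan ℝ (Matrix (Fin 4) (Fin 4) ℂ)
      {Complex.I • H0, Complex.I • V} ≤ S := by
    rw [LieSubalgebra.lieSpan_le]
    rintro x hx
    rcases hx with rfl | rfl
    · refine ⟨?_,?_,?_,?_,?_,?_,?_,?_,?_,?_,?_,?_⟩ <;>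
        simp [H0, Matrix.smul_apply, Matrix.diagonal_apply, Complex.ext_iff] <;> norm_num
    · refine ⟨?_,?_,?_,?_,?_,?_,?_,?_,?_,?_,?_,?_⟩ <;>
        simp [V, Matrix.smul_apply, Complex.ext_iff, Matrix.vecHead, Matrix.vecTail]
  have hinj : Function.Injective (phiS.domRestrict S.toSubmodule) := by
    rw [← LinearMap.ker_eq_bot, LinearMap.ker_eq_bot']
    rintro ⟨X, h1,h2,h3,h4,h5,h6,h7,h8,h9,h10,h11,h12⟩ hX
    have e : ∀ i : Fin 7, X (idx7 i).1 (idx7 i).2 = 0 := fun i => congrFun hX i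
    have e0 : X 0 0 = 0 := e 0
    have e1 : X 1 1 = 0 := e 1
    have e2 : X 2 2 = 0 := e 2
    have e3 : X 0 1 = 0 := e 3
    have e4 : X 0 2 = 0 := e 4
    have e5 : X 0 3 = 0 := e 5
    have e6 : X 1 2 = 0 := e 6
    ext i j
    fin_cases i <;> fin_cases j <;>
      simp_all
  have h1 : Module.finrank ℝ
      (LieSubalgebra.lieSpan ℝ (Matrix (Fin 4) (Fin 4) ℂ)
        {Complex.I • H0, Complex.I • V}) ≤ Module.finrank ℝ S :=
    Submodule.finrank_mono hsub
  have h2 : Module.finrank ℝ S ≤ Module.finrank ℝ (Fin 7 → ℂ) :=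
    LinearMap.finrank_le_finrank_of_injective hinj
  have h3 : Module.finrank ℝ (Fin 7 → ℂ) = 14 := by
    simp [Module.finrank_pi_fintype, Complex.finrank_real_complex]
  omega
end

section
/- Consider the 4×4 matrices H_0 = diag(0.5, 1.5, 2.5, 3.5) and V' the tridiagonal symmetric matrix with zero diagonal and off-diagonal entries (1, 1, c) for some real c ≠ ±1, c ≠ 0. Then the real Lie algebra generated by iH_0 and iV' inside u(4) has dimension 16, i.e., the system is completely controllable. -/
open Matrix

attribute [local instance 100] LieRing.ofAssociativeRing

section FinFourHelpers

variable {α : Type*}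

private theorem eq_fin_four {a₀₀ a₀₁ a₀₂ a₀₃ a₁₀ a₁₁ a₁₂ a₁₃ a₂₀ a₂₁ a₂₂ a₂₃ a₃₀ a₃₁ a₃₂ a₃₃
    b₀₀ b₀₁ b₀₂ b₀₃ b₁₀ b₁₁ b₁₂ b₁₃ b₂₀ b₂₁ b₂₂ b₂₃ b₃₀ b₃₁ b₃₂ b₃₃ : α}
    (h₀₀ : a₀₀ = b₀₀) (h₀₁ : a₀₁ = b₀₁) (h₀₂ : a₀₂ = b₀₂) (h₀₃ : a₀₃ = b₀₃)
    (h₁₀ : a₁₀ = b₁₀) (h₁₁ : a₁₁ = b₁₁) (h₁₂ : a₁₂ = b₁₂) (h₁₃ : a₁₃ = b₁₃)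
    (h₂₀ : a₂₀ = b₂₀) (h₂₁ : a₂₁ = b₂₁) (h₂₂ : a₂₂ = b₂₂) (h₂₃ : a₂₃ = b₂₃)
    (h₃₀ : a₃₀ = b₃₀) (h₃₁ : a₃₁ = b₃₁) (h₃₂ : a₃₂ = b₃₂) (h₃₃ : a₃₃ = b₃₃) :
    !![a₀₀,a₀₁,a₀₂,a₀₃; a₁₀,a₁₁,a₁₂,a₁₃; a₂₀,a₂₁,a₂₂,a₂₃; a₃₀,a₃₁,a₃₂,a₃₃] =
    !![b₀₀,b₀₁,b₀₂,b₀₃; b₁₀,b₁₁,b₁₂,b₁₃; b₂₀,b₂₁,b₂₂,b₂₃; b₃₀,b₃₁,b₃₂,b₃₃] := by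
  subst_vars; rfl

private theorem mul_fin_four [NonUnitalNonAssocSemiring α]
    (a₀₀ a₀₁ a₀₂ a₀₃ a₁₀ a₁₁ a₁₂ a₁₃ a₂₀ a₂₁ a₂₂ a₂₃ a₃₀ a₃₁ a₃₂ a₃₃
     b₀₀ b₀₁ b₀₂ b₀₃ b₁₀ b₁₁ b₁₂ b₁₃ b₂₀ b₂₁ b₂₂ b₂₃ b₃₀ b₃₁ b₃₂ b₃₃ : α) :
    !![a₀₀,a₀₁,a₀₂,a₀₃; a₁₀,a₁₁,a₁₂,a₁₃; a₂₀,a₂₁,a₂₂,a₂₃; a₃₀,a₃₁,a₃₂,a₃₃] *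
    !![b₀₀,b₀₁,b₀₂,b₀₃; b₁₀,b₁₁,b₁₂,b₁₃; b₂₀,b₂₁,b₂₂,b₂₃; b₃₀,b₃₁,b₃₂,b₃₃] =
    !![a₀₀*b₀₀+a₀₁*b₁₀+a₀₂*b₂₀+a₀₃*b₃₀, a₀₀*b₀₁+a₀₁*b₁₁+a₀₂*b₂₁+a₀₃*b₃₁,
       a₀₀*b₀₂+a₀₁*b₁₂+a₀₂*b₂₂+a₀₃*b₃₂, a₀₀*b₀₃+a₀₁*b₁₃+a₀₂*b₂₃+a₀₃*b₃₃;
       a₁₀*b₀₀+a₁₁*b₁₀+a₁₂*b₂₀+a₁₃*b₃₀, a₁₀*b₀₁+a₁₁*b₁₁+a₁₂*b₂₁+a₁₃*b₃₁,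
       a₁₀*b₀₂+a₁₁*b₁₂+a₁₂*b₂₂+a₁₃*b₃₂, a₁₀*b₀₃+a₁₁*b₁₃+a₁₂*b₂₃+a₁₃*b₃₃;
       a₂₀*b₀₀+a₂₁*b₁₀+a₂₂*b₂₀+a₂₃*b₃₀, a₂₀*b₀₁+a₂₁*b₁₁+a₂₂*b₂₁+a₂₃*b₃₁,
       a₂₀*b₀₂+a₂₁*b₁₂+a₂₂*b₂₂+a₂₃*b₃₂, a₂₀*b₀₃+a₂₁*b₁₃+a₂₂*b₂₃+a₂₃*b₃₃;
       a₃₀*b₀₀+a₃₁*b₁₀+a₃₂*b₂₀+a₃₃*b₃₀, a₃₀*b₀₁+a₃₁*b₁₁+a₃₂*b₂₁+a₃₃*b₃₁,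
       a₃₀*b₀₂+a₃₁*b₁₂+a₃₂*b₂₂+a₃₃*b₃₂, a₃₀*b₀₃+a₃₁*b₁₃+a₃₂*b₂₃+a₃₃*b₃₃] := by
  ext i j
  fin_cases i <;> fin_cases j <;>
    simp [Matrix.mul_apply, Fin.sum_univ_succ, add_assoc]

private theorem sub_fin_four [Sub α]
    (a₀₀ a₀₁ a₀₂ a₀₃ a₁₀ a₁₁ a₁₂ a₁₃ a₂₀ a₂₁ a₂₂ a₂₃ a₃₀ a₃₁ a₃₂ a₃₃
     b₀₀ b₀₁ b₀₂ b₀₃ b₁₀ b₁₁ b₁₂ b₁₃ b₂₀ b₂₁ b₂₂ b₂₃ b₃₀ b₃₁ b₃₂ b₃₃ : α) :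
    (!![a₀₀,a₀₁,a₀₂,a₀₃; a₁₀,a₁₁,a₁₂,a₁₃; a₂₀,a₂₁,a₂₂,a₂₃; a₃₀,a₃₁,a₃₂,a₃₃] -
    !![b₀₀,b₀₁,b₀₂,b₀₃; b₁₀,b₁₁,b₁₂,b₁₃; b₂₀,b₂₁,b₂₂,b₂₃; b₃₀,b₃₁,b₃₂,b₃₃] :
      Matrix (Fin 4) (Fin 4) α) =
    !![a₀₀-b₀₀,a₀₁-b₀₁,a₀₂-b₀₂,a₀₃-b₀₃; a₁₀-b₁₀,a₁₁-b₁₁,a₁₂-b₁₂,a₁₃-b₁₃;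
       a₂₀-b₂₀,a₂₁-b₂₁,a₂₂-b₂₂,a₂₃-b₂₃; a₃₀-b₃₀,a₃₁-b₃₁,a₃₂-b₃₂,a₃₃-b₃₃] := by
  ext i j
  fin_cases i <;> fin_cases j <;> rfl

private theorem add_fin_four [Add α]
    (a₀₀ a₀₁ a₀₂ a₀₃ a₁₀ a₁₁ a₁₂ a₁₃ a₂₀ a₂₁ a₂₂ a₂₃ a₃₀ a₃₁ a₃₂ a₃₃
     b₀₀ b₀₁ b₀₂ b₀₃ b₁₀ b₁₁ b₁₂ b₁₃ b₂₀ b₂₁ b₂₂ b₂₃ b₃₀ b₃₁ b₃₂ b₃₃ : α) :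
    (!![a₀₀,a₀₁,a₀₂,a₀₃; a₁₀,a₁₁,a₁₂,a₁₃; a₂₀,a₂₁,a₂₂,a₂₃; a₃₀,a₃₁,a₃₂,a₃₃] +
    !![b₀₀,b₀₁,b₀₂,b₀₃; b₁₀,b₁₁,b₁₂,b₁₃; b₂₀,b₂₁,b₂₂,b₂₃; b₃₀,b₃₁,b₃₂,b₃₃] :
      Matrix (Fin 4) (Fin 4) α) =
    !![a₀₀+b₀₀,a₀₁+b₀₁,a₀₂+b₀₂,a₀₃+b₀₃; a₁₀+b₁₀,a₁₁+b₁₁,a₁₂+b₁₂,a₁₃+b₁₃;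
       a₂₀+b₂₀,a₂₁+b₂₁,a₂₂+b₂₂,a₂₃+b₂₃; a₃₀+b₃₀,a₃₁+b₃₁,a₃₂+b₃₂,a₃₃+b₃₃] := by
  ext i j
  fin_cases i <;> fin_cases j <;> rfl

private theorem smul_fin_four {R : Type*} [SMul R α] (r : R)
    (a₀₀ a₀₁ a₀₂ a₀₃ a₁₀ a₁₁ a₁₂ a₁₃ a₂₀ a₂₁ a₂₂ a₂₃ a₃₀ a₃₁ a₃₂ a₃₃ : α) :
    r • (!![a₀₀,a₀₁,a₀₂,a₀₃; a₁₀,a₁₁,a₁₂,a₁₃; a₂₀,a₂₁,a₂₂,a₂₃; a₃₀,a₃₁,a₃₂,a₃₃] :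
      Matrix (Fin 4) (Fin 4) α) =
    !![r•a₀₀,r•a₀₁,r•a₀₂,r•a₀₃; r•a₁₀,r•a₁₁,r•a₁₂,r•a₁₃;
       r•a₂₀,r•a₂₁,r•a₂₂,r•a₂₃; r•a₃₀,r•a₃₁,r•a₃₂,r•a₃₃] := by
  ext i j
  fin_cases i <;> fin_cases j <;> rfl

end FinFourHelpers

/-- The coordinate map reading off the 16 real parameters of a skew-Hermitian
`4 × 4` complex matrix. -/
def psiFun : Matrix (Fin 4) (Fin 4) ℂ →ₗ[ℝ] ((Fin 4 × Fin 4) → ℝ) where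
  toFun A := fun p => if p.1 < p.2 then (A p.1 p.2).re else (A p.1 p.2).im
  map_add' A B := by
    funext p
    by_cases h : p.1 < p.2 <;> simp [h]
  map_smul' r A := by
    funext p
    by_cases h : p.1 < p.2 <;> simp [h, Complex.smul_re, Complex.smul_im]

@[simp] theorem psiFun_apply (A : Matrix (Fin 4) (Fin 4) ℂ) (p : Fin 4 × Fin 4) :
    psiFun A p = if p.1 < p.2 then (A p.1 p.2).re else (A p.1 p.2).im := rfl

/-- The unitary Lie algebra `u(4)` of skew-Hermitian matrices, as a real Lie
subalgebra of all `4 × 4` complex matrices. -/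
def u4 : LieSubalgebra ℝ (Matrix (Fin 4) (Fin 4) ℂ) where
  carrier := {A | Aᴴ = -A}
  zero_mem' := by simp
  add_mem' := by
    intro A B hA hB
    simp only [Set.mem_setOf_eq] at *
    rw [conjTranspose_add, hA, hB, neg_add]
  smul_mem' := by
    intro r A hA
    simp only [Set.mem_setOf_eq] at *
    rw [conjTranspose_smul, hA, star_trivial, smul_neg]
  lie_mem' := by
    intro x y hx hy
    simp only [Set.mem_setOf_eq] at *
    rw [Ring.lie_def, conjTranspose_sub, conjTranspose_mul, conjTranspose_mul, hx, hy]
    simp [Matrix.mul_neg, Matrix.neg_mul]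
    try abel

theorem mem_u4 {A : Matrix (Fin 4) (Fin 4) ℂ} : A ∈ u4 ↔ Aᴴ = -A := Iff.rfl

theorem psiFun_eq_zero {A : Matrix (Fin 4) (Fin 4) ℂ} (hA : Aᴴ = -A)
    (h : psiFun A = 0) : A = 0 := by
  have hskew : ∀ i j, (starRingEnd ℂ) (A j i) = -A i j := by
    intro i j
    have h0 : Aᴴ i j = (-A) i j := by rw [hA]
    simpa [Matrix.conjTranspose_apply] using h0
  have hcoord : ∀ p : Fin 4 × Fin 4,
      (if p.1 < p.2 then (A p.1 p.2).re else (A p.1 p.2).im) = 0 := by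
    intro p
    have := congrFun h p
    simpa using this
  ext i j
  rw [Matrix.zero_apply]
  rcases lt_trichotomy i j with hij | hij | hij
  · refine Complex.ext ?_ ?_ <;> simp only [Complex.zero_re, Complex.zero_im]
    · simpa [hij] using hcoord (i, j)
    · have h1 : (A j i).im = 0 := by simpa [not_lt.mpr hij.le] using hcoord (j, i)
      have h2 := congrArg Complex.im (hskew i j)
      simpa [h1] using h2.symm
  · subst hij
    refine Complex.ext ?_ ?_ <;> simp only [Complex.zero_re, Complex.zero_im]
    · have h2 := congrArg Complex.re (hskew i i)
      simp at h2
      linarith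
    · simpa using hcoord (i, i)
  · refine Complex.ext ?_ ?_ <;> simp only [Complex.zero_re, Complex.zero_im]
    · have h1 : (A j i).re = 0 := by simpa [hij] using hcoord (j, i)
      have h2 := congrArg Complex.re (hskew i j)
      simpa [h1] using h2.symm
    · simpa [not_lt.mpr hij.le] using hcoord (i, j)
def mD0 : Matrix (Fin 4) (Fin 4) ℂ := !![(1)*Complex.I, 0, 0, 0; 0, 0, 0, 0; 0, 0, 0, 0; 0, 0, 0, 0]
def mD1 : Matrix (Fin 4) (Fin 4) ℂ := !![0, 0, 0, 0; 0, (1)*Complex.I, 0, 0; 0, 0, 0, 0; 0, 0, 0, 0]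
def mD2 : Matrix (Fin 4) (Fin 4) ℂ := !![0, 0, 0, 0; 0, 0, 0, 0; 0, 0, (1)*Complex.I, 0; 0, 0, 0, 0]
def mD3 : Matrix (Fin 4) (Fin 4) ℂ := !![0, 0, 0, 0; 0, 0, 0, 0; 0, 0, 0, 0; 0, 0, 0, (1)*Complex.I]
def mS01 : Matrix (Fin 4) (Fin 4) ℂ := !![0, (1)*Complex.I, 0, 0; (1)*Complex.I, 0, 0, 0; 0, 0, 0, 0; 0, 0, 0, 0]
def mS02 : Matrix (Fin 4) (Fin 4) ℂ := !![0, 0, (1)*Complex.I, 0; 0, 0, 0, 0; (1)*Complex.I, 0, 0, 0; 0, 0, 0, 0]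
def mS03 : Matrix (Fin 4) (Fin 4) ℂ := !![0, 0, 0, (1)*Complex.I; 0, 0, 0, 0; 0, 0, 0, 0; (1)*Complex.I, 0, 0, 0]
def mS12 : Matrix (Fin 4) (Fin 4) ℂ := !![0, 0, 0, 0; 0, 0, (1)*Complex.I, 0; 0, (1)*Complex.I, 0, 0; 0, 0, 0, 0]
def mS13 : Matrix (Fin 4) (Fin 4) ℂ := !![0, 0, 0, 0; 0, 0, 0, (1)*Complex.I; 0, 0, 0, 0; 0, (1)*Complex.I, 0, 0]
def mS23 : Matrix (Fin 4) (Fin 4) ℂ := !![0, 0, 0, 0; 0, 0, 0, 0; 0, 0, 0, (1)*Complex.I; 0, 0, (1)*Complex.I, 0]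
def mA01 : Matrix (Fin 4) (Fin 4) ℂ := !![0, 1, 0, 0; (-1), 0, 0, 0; 0, 0, 0, 0; 0, 0, 0, 0]
def mA02 : Matrix (Fin 4) (Fin 4) ℂ := !![0, 0, 1, 0; 0, 0, 0, 0; (-1), 0, 0, 0; 0, 0, 0, 0]
def mA03 : Matrix (Fin 4) (Fin 4) ℂ := !![0, 0, 0, 1; 0, 0, 0, 0; 0, 0, 0, 0; (-1), 0, 0, 0]
def mA12 : Matrix (Fin 4) (Fin 4) ℂ := !![0, 0, 0, 0; 0, 0, 1, 0; 0, (-1), 0, 0; 0, 0, 0, 0]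
def mA13 : Matrix (Fin 4) (Fin 4) ℂ := !![0, 0, 0, 0; 0, 0, 0, 1; 0, 0, 0, 0; 0, (-1), 0, 0]
def mA23 : Matrix (Fin 4) (Fin 4) ℂ := !![0, 0, 0, 0; 0, 0, 0, 0; 0, 0, 0, 1; 0, 0, (-1), 0]

/-- The sixteen standard basis matrices of `u(4)`, indexed by `Fin 4 × Fin 4`. -/
def basm : Fin 4 × Fin 4 → Matrix (Fin 4) (Fin 4) ℂ := fun p =>
  ![![mD0, mA01, mA02, mA03],
    ![mS01, mD1, mA12, mA13],
    ![mS02, mS12, mD2, mA23],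
    ![mS03, mS13, mS23, mD3]] p.1 p.2

set_option maxHeartbeats 4000000 in
/-- Changing one transition moment to `c ≠ 0, ±1` restores complete
controllability: the generated real Lie algebra has dimension `16`. -/
theorem modified_oscillator_controllable (c : ℝ)
    (hc0 : c ≠ 0) (hc1 : c ≠ 1) (hcm1 : c ≠ -1) :
    let H0 : Matrix (Fin 4) (Fin 4) ℂ := Matrix.diagonal ![0.5, 1.5, 2.5, 3.5]
    let V' : Matrix (Fin 4) (Fin 4) ℂ :=
      !![0, 1, 0, 0; 1, 0, 1, 0; 0, 1, 0, (c : ℂ); 0, 0, (c : ℂ), 0]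
    Module.finrank ℝ
      (LieSubalgebra.lieSpan ℝ (Matrix (Fin 4) (Fin 4) ℂ)
        {Complex.I • H0, Complex.I • V'}) = 16 := by
  intro H0 V'
  set K := LieSubalgebra.lieSpan ℝ (Matrix (Fin 4) (Fin 4) ℂ)
    {Complex.I • H0, Complex.I • V'} with hK
  -- nonvanishing scalars
  have hc1' : c - 1 ≠ 0 := sub_ne_zero.mpr hc1
  have hcm1' : c + 1 ≠ 0 := by
    intro h; exact hcm1 (by linarith)
  have hcsq : c ^ 2 - 1 ≠ 0 := by
    have : c ^ 2 - 1 = (c - 1) * (c + 1) := by ring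
    rw [this]; exact mul_ne_zero hc1' hcm1'
  have hk1 : (32 * c ^ 2 * (c ^ 2 - 1) : ℝ) ≠ 0 :=
    mul_ne_zero (mul_ne_zero (by norm_num) (pow_ne_zero 2 hc0)) hcsq
  have hk2 : (16 * c ^ 2 : ℝ) ≠ 0 := mul_ne_zero (by norm_num) (pow_ne_zero 2 hc0)
  have e0 : Complex.I • H0 = !![((1/2))*Complex.I, 0, 0, 0; 0, ((3/2))*Complex.I, 0, 0; 0, 0, ((5/2))*Complex.I, 0; 0, 0, 0, ((7/2))*Complex.I] := by
    have hH0 : H0 = Matrix.diagonal ![0.5, 1.5, 2.5, 3.5] := rfl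
    rw [hH0]
    ext i j
    fin_cases i <;> fin_cases j <;>
      simp [Matrix.diagonal, Matrix.vecHead, Matrix.vecTail] <;>
      (apply Complex.ext <;> norm_num)
  have e1 : Complex.I • V' = !![0, (1)*Complex.I, 0, 0; (1)*Complex.I, 0, (1)*Complex.I, 0; 0, (1)*Complex.I, 0, ((c:ℂ))*Complex.I; 0, 0, ((c:ℂ))*Complex.I, 0] := by
    have hV : V' = !![0, 1, 0, 0; 1, 0, 1, 0; 0, 1, 0, (c : ℂ); 0, 0, (c : ℂ), 0] := rfl
    rw [hV, smul_fin_four]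
    apply eq_fin_four <;> (apply Complex.ext <;> (simp [← Complex.ofReal_pow, Complex.smul_re, Complex.smul_im]; try ring))
  have mG1 : (!![((1/2))*Complex.I, 0, 0, 0; 0, ((3/2))*Complex.I, 0, 0; 0, 0, ((5/2))*Complex.I, 0; 0, 0, 0, ((7/2))*Complex.I] : Matrix (Fin 4) (Fin 4) ℂ) ∈ K := by
    rw [← e0]
    exact LieSubalgebra.subset_lieSpan (Set.mem_insert _ _)
  have mP0 : (!![0, (1)*Complex.I, 0, 0; (1)*Complex.I, 0, (1)*Complex.I, 0; 0, (1)*Complex.I, 0, ((c:ℂ))*Complex.I; 0, 0, ((c:ℂ))*Complex.I, 0] : Matrix (Fin 4) (Fin 4) ℂ) ∈ K := by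
    rw [← e1]
    exact LieSubalgebra.subset_lieSpan (Set.mem_insert_of_mem _ rfl)
  have t1 : ⁅(!![((1/2))*Complex.I, 0, 0, 0; 0, ((3/2))*Complex.I, 0, 0; 0, 0, ((5/2))*Complex.I, 0; 0, 0, 0, ((7/2))*Complex.I] : Matrix (Fin 4) (Fin 4) ℂ), !![0, (1)*Complex.I, 0, 0; (1)*Complex.I, 0, (1)*Complex.I, 0; 0, (1)*Complex.I, 0, ((c:ℂ))*Complex.I; 0, 0, ((c:ℂ))*Complex.I, 0]⁆ = !![0, 1, 0, 0; (-1), 0, 1, 0; 0, (-1), 0, (c:ℂ); 0, 0, (-1)*(c:ℂ), 0] := by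
    try simp only [mD0, mD1, mD2, mD3, mS01, mS02, mS03, mS12, mS13, mS23, mA01, mA02, mA03, mA12, mA13, mA23]
    rw [Ring.lie_def, mul_fin_four, mul_fin_four, sub_fin_four]
    try simp only [smul_fin_four]
    apply eq_fin_four <;> (apply Complex.ext <;> (simp [← Complex.ofReal_pow, Complex.smul_re, Complex.smul_im]; try ring))
  have mP1 : (!![0, 1, 0, 0; (-1), 0, 1, 0; 0, (-1), 0, (c:ℂ); 0, 0, (-1)*(c:ℂ), 0] : Matrix (Fin 4) (Fin 4) ℂ) ∈ K := t1 ▸ K.lie_mem mG1 mP0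
  have t2 : ⁅(!![0, (1)*Complex.I, 0, 0; (1)*Complex.I, 0, (1)*Complex.I, 0; 0, (1)*Complex.I, 0, ((c:ℂ))*Complex.I; 0, 0, ((c:ℂ))*Complex.I, 0] : Matrix (Fin 4) (Fin 4) ℂ), !![0, 1, 0, 0; (-1), 0, 1, 0; 0, (-1), 0, (c:ℂ); 0, 0, (-1)*(c:ℂ), 0]⁆ = !![((-2))*Complex.I, 0, 0, 0; 0, 0, 0, 0; 0, 0, (2 + (-2)*(c:ℂ)^2)*Complex.I, 0; 0, 0, 0, (2*(c:ℂ)^2)*Complex.I] := by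
    try simp only [mD0, mD1, mD2, mD3, mS01, mS02, mS03, mS12, mS13, mS23, mA01, mA02, mA03, mA12, mA13, mA23]
    rw [Ring.lie_def, mul_fin_four, mul_fin_four, sub_fin_four]
    try simp only [smul_fin_four]
    apply eq_fin_four <;> (apply Complex.ext <;> (simp [← Complex.ofReal_pow, Complex.smul_re, Complex.smul_im]; try ring))
  have mQ : (!![((-2))*Complex.I, 0, 0, 0; 0, 0, 0, 0; 0, 0, (2 + (-2)*(c:ℂ)^2)*Complex.I, 0; 0, 0, 0, (2*(c:ℂ)^2)*Complex.I] : Matrix (Fin 4) (Fin 4) ℂ) ∈ K := t2 ▸ K.lie_mem mP0 mP1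
  have t3 : ⁅(!![((-2))*Complex.I, 0, 0, 0; 0, 0, 0, 0; 0, 0, (2 + (-2)*(c:ℂ)^2)*Complex.I, 0; 0, 0, 0, (2*(c:ℂ)^2)*Complex.I] : Matrix (Fin 4) (Fin 4) ℂ), !![0, (1)*Complex.I, 0, 0; (1)*Complex.I, 0, (1)*Complex.I, 0; 0, (1)*Complex.I, 0, ((c:ℂ))*Complex.I; 0, 0, ((c:ℂ))*Complex.I, 0]⁆ = !![0, 2, 0, 0; (-2), 0, 2 + (-2)*(c:ℂ)^2, 0; 0, (-2) + 2*(c:ℂ)^2, 0, (-2)*(c:ℂ) + 4*(c:ℂ)^3; 0, 0, 2*(c:ℂ) + (-4)*(c:ℂ)^3, 0] := by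
    try simp only [mD0, mD1, mD2, mD3, mS01, mS02, mS03, mS12, mS13, mS23, mA01, mA02, mA03, mA12, mA13, mA23]
    rw [Ring.lie_def, mul_fin_four, mul_fin_four, sub_fin_four]
    try simp only [smul_fin_four]
    apply eq_fin_four <;> (apply Complex.ext <;> (simp [← Complex.ofReal_pow, Complex.smul_re, Complex.smul_im]; try ring))
  have mR1 : (!![0, 2, 0, 0; (-2), 0, 2 + (-2)*(c:ℂ)^2, 0; 0, (-2) + 2*(c:ℂ)^2, 0, (-2)*(c:ℂ) + 4*(c:ℂ)^3; 0, 0, 2*(c:ℂ) + (-4)*(c:ℂ)^3, 0] : Matrix (Fin 4) (Fin 4) ℂ) ∈ K := t3 ▸ K.lie_mem mQ mP0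
  have t4 : ⁅(!![0, (1)*Complex.I, 0, 0; (1)*Complex.I, 0, (1)*Complex.I, 0; 0, (1)*Complex.I, 0, ((c:ℂ))*Complex.I; 0, 0, ((c:ℂ))*Complex.I, 0] : Matrix (Fin 4) (Fin 4) ℂ), !![0, 2, 0, 0; (-2), 0, 2 + (-2)*(c:ℂ)^2, 0; 0, (-2) + 2*(c:ℂ)^2, 0, (-2)*(c:ℂ) + 4*(c:ℂ)^3; 0, 0, 2*(c:ℂ) + (-4)*(c:ℂ)^3, 0]⁆ = !![((-4))*Complex.I, 0, ((-2)*(c:ℂ)^2)*Complex.I, 0; 0, (4*(c:ℂ)^2)*Complex.I, 0, ((-4)*(c:ℂ) + 6*(c:ℂ)^3)*Complex.I; ((-2)*(c:ℂ)^2)*Complex.I, 0, (4 + (-8)*(c:ℂ)^4)*Complex.I, 0; 0, ((-4)*(c:ℂ) + 6*(c:ℂ)^3)*Complex.I, 0, ((-4)*(c:ℂ)^2 + 8*(c:ℂ)^4)*Complex.I] := by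
    try simp only [mD0, mD1, mD2, mD3, mS01, mS02, mS03, mS12, mS13, mS23, mA01, mA02, mA03, mA12, mA13, mA23]
    rw [Ring.lie_def, mul_fin_four, mul_fin_four, sub_fin_four]
    try simp only [smul_fin_four]
    apply eq_fin_four <;> (apply Complex.ext <;> (simp [← Complex.ofReal_pow, Complex.smul_re, Complex.smul_im]; try ring))
  have mU : (!![((-4))*Complex.I, 0, ((-2)*(c:ℂ)^2)*Complex.I, 0; 0, (4*(c:ℂ)^2)*Complex.I, 0, ((-4)*(c:ℂ) + 6*(c:ℂ)^3)*Complex.I; ((-2)*(c:ℂ)^2)*Complex.I, 0, (4 + (-8)*(c:ℂ)^4)*Complex.I, 0; 0, ((-4)*(c:ℂ) + 6*(c:ℂ)^3)*Complex.I, 0, ((-4)*(c:ℂ)^2 + 8*(c:ℂ)^4)*Complex.I] : Matrix (Fin 4) (Fin 4) ℂ) ∈ K := t4 ▸ K.lie_mem mP0 mR1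
  have t5 : ⁅(!![((1/2))*Complex.I, 0, 0, 0; 0, ((3/2))*Complex.I, 0, 0; 0, 0, ((5/2))*Complex.I, 0; 0, 0, 0, ((7/2))*Complex.I] : Matrix (Fin 4) (Fin 4) ℂ), !![((-4))*Complex.I, 0, ((-2)*(c:ℂ)^2)*Complex.I, 0; 0, (4*(c:ℂ)^2)*Complex.I, 0, ((-4)*(c:ℂ) + 6*(c:ℂ)^3)*Complex.I; ((-2)*(c:ℂ)^2)*Complex.I, 0, (4 + (-8)*(c:ℂ)^4)*Complex.I, 0; 0, ((-4)*(c:ℂ) + 6*(c:ℂ)^3)*Complex.I, 0, ((-4)*(c:ℂ)^2 + 8*(c:ℂ)^4)*Complex.I]⁆ = !![0, 0, (-4)*(c:ℂ)^2, 0; 0, 0, 0, (-8)*(c:ℂ) + 12*(c:ℂ)^3; 4*(c:ℂ)^2, 0, 0, 0; 0, 8*(c:ℂ) + (-12)*(c:ℂ)^3, 0, 0] := by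
    try simp only [mD0, mD1, mD2, mD3, mS01, mS02, mS03, mS12, mS13, mS23, mA01, mA02, mA03, mA12, mA13, mA23]
    rw [Ring.lie_def, mul_fin_four, mul_fin_four, sub_fin_four]
    try simp only [smul_fin_four]
    apply eq_fin_four <;> (apply Complex.ext <;> (simp [← Complex.ofReal_pow, Complex.smul_re, Complex.smul_im]; try ring))
  have mU1 : (!![0, 0, (-4)*(c:ℂ)^2, 0; 0, 0, 0, (-8)*(c:ℂ) + 12*(c:ℂ)^3; 4*(c:ℂ)^2, 0, 0, 0; 0, 8*(c:ℂ) + (-12)*(c:ℂ)^3, 0, 0] : Matrix (Fin 4) (Fin 4) ℂ) ∈ K := t5 ▸ K.lie_mem mG1 mU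
  have t6 : ⁅(!![((1/2))*Complex.I, 0, 0, 0; 0, ((3/2))*Complex.I, 0, 0; 0, 0, ((5/2))*Complex.I, 0; 0, 0, 0, ((7/2))*Complex.I] : Matrix (Fin 4) (Fin 4) ℂ), !![0, 0, (-4)*(c:ℂ)^2, 0; 0, 0, 0, (-8)*(c:ℂ) + 12*(c:ℂ)^3; 4*(c:ℂ)^2, 0, 0, 0; 0, 8*(c:ℂ) + (-12)*(c:ℂ)^3, 0, 0]⁆ = !![0, 0, (8*(c:ℂ)^2)*Complex.I, 0; 0, 0, 0, (16*(c:ℂ) + (-24)*(c:ℂ)^3)*Complex.I; (8*(c:ℂ)^2)*Complex.I, 0, 0, 0; 0, (16*(c:ℂ) + (-24)*(c:ℂ)^3)*Complex.I, 0, 0] := by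
    try simp only [mD0, mD1, mD2, mD3, mS01, mS02, mS03, mS12, mS13, mS23, mA01, mA02, mA03, mA12, mA13, mA23]
    rw [Ring.lie_def, mul_fin_four, mul_fin_four, sub_fin_four]
    try simp only [smul_fin_four]
    apply eq_fin_four <;> (apply Complex.ext <;> (simp [← Complex.ofReal_pow, Complex.smul_re, Complex.smul_im]; try ring))
  have mU2 : (!![0, 0, (8*(c:ℂ)^2)*Complex.I, 0; 0, 0, 0, (16*(c:ℂ) + (-24)*(c:ℂ)^3)*Complex.I; (8*(c:ℂ)^2)*Complex.I, 0, 0, 0; 0, (16*(c:ℂ) + (-24)*(c:ℂ)^3)*Complex.I, 0, 0] : Matrix (Fin 4) (Fin 4) ℂ) ∈ K := t6 ▸ K.lie_mem mG1 mU1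
  have t7 : (!![((-72)*(c:ℂ)^2 + 136*(c:ℂ)^4)*Complex.I, 0, 0, 0; 0, ((-104)*(c:ℂ)^2 + 168*(c:ℂ)^4)*Complex.I, 0, 0; 0, 0, ((-104)*(c:ℂ)^2 + 168*(c:ℂ)^4)*Complex.I, 0; 0, 0, 0, ((-104)*(c:ℂ)^2 + 168*(c:ℂ)^4)*Complex.I] : Matrix (Fin 4) (Fin 4) ℂ) =
      (16*c^2*(5*c^2-3) : ℝ) • !![((1/2))*Complex.I, 0, 0, 0; 0, ((3/2))*Complex.I, 0, 0; 0, 0, ((5/2))*Complex.I, 0; 0, 0, 0, ((7/2))*Complex.I] + (16-48*c^4 : ℝ) • !![((-2))*Complex.I, 0, 0, 0; 0, 0, 0, 0; 0, 0, (2 + (-2)*(c:ℂ)^2)*Complex.I, 0; 0, 0, 0, (2*(c:ℂ)^2)*Complex.I] +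
      (3*c^2-2 : ℝ) • ((4:ℝ) • !![((-4))*Complex.I, 0, ((-2)*(c:ℂ)^2)*Complex.I, 0; 0, (4*(c:ℂ)^2)*Complex.I, 0, ((-4)*(c:ℂ) + 6*(c:ℂ)^3)*Complex.I; ((-2)*(c:ℂ)^2)*Complex.I, 0, (4 + (-8)*(c:ℂ)^4)*Complex.I, 0; 0, ((-4)*(c:ℂ) + 6*(c:ℂ)^3)*Complex.I, 0, ((-4)*(c:ℂ)^2 + 8*(c:ℂ)^4)*Complex.I] + !![0, 0, (8*(c:ℂ)^2)*Complex.I, 0; 0, 0, 0, (16*(c:ℂ) + (-24)*(c:ℂ)^3)*Complex.I; (8*(c:ℂ)^2)*Complex.I, 0, 0, 0; 0, (16*(c:ℂ) + (-24)*(c:ℂ)^3)*Complex.I, 0, 0]) := by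
    simp only [smul_fin_four, add_fin_four]
    apply eq_fin_four <;> (apply Complex.ext <;> (simp [← Complex.ofReal_pow, Complex.smul_re, Complex.smul_im]; try ring))
  have mXa : (!![((-72)*(c:ℂ)^2 + 136*(c:ℂ)^4)*Complex.I, 0, 0, 0; 0, ((-104)*(c:ℂ)^2 + 168*(c:ℂ)^4)*Complex.I, 0, 0; 0, 0, ((-104)*(c:ℂ)^2 + 168*(c:ℂ)^4)*Complex.I, 0; 0, 0, 0, ((-104)*(c:ℂ)^2 + 168*(c:ℂ)^4)*Complex.I] : Matrix (Fin 4) (Fin 4) ℂ) ∈ K := by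
    rw [t7]
    exact add_mem (add_mem (K.smul_mem _ mG1) (K.smul_mem _ mQ))
      (K.smul_mem _ (add_mem (K.smul_mem _ mU) mU2))
  have t8 : (!![((-40)*(c:ℂ)^2)*Complex.I, 0, 0, 0; 0, ((-40)*(c:ℂ)^2)*Complex.I, 0, 0; 0, 0, ((-24)*(c:ℂ)^2)*Complex.I, 0; 0, 0, 0, ((-24)*(c:ℂ)^2)*Complex.I] : Matrix (Fin 4) (Fin 4) ℂ) =
      (-16*c^2 : ℝ) • !![((1/2))*Complex.I, 0, 0, 0; 0, ((3/2))*Complex.I, 0, 0; 0, 0, ((5/2))*Complex.I, 0; 0, 0, 0, ((7/2))*Complex.I] + (8+16*c^2 : ℝ) • !![((-2))*Complex.I, 0, 0, 0; 0, 0, 0, 0; 0, 0, (2 + (-2)*(c:ℂ)^2)*Complex.I, 0; 0, 0, 0, (2*(c:ℂ)^2)*Complex.I] +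
      (-1 : ℝ) • ((4:ℝ) • !![((-4))*Complex.I, 0, ((-2)*(c:ℂ)^2)*Complex.I, 0; 0, (4*(c:ℂ)^2)*Complex.I, 0, ((-4)*(c:ℂ) + 6*(c:ℂ)^3)*Complex.I; ((-2)*(c:ℂ)^2)*Complex.I, 0, (4 + (-8)*(c:ℂ)^4)*Complex.I, 0; 0, ((-4)*(c:ℂ) + 6*(c:ℂ)^3)*Complex.I, 0, ((-4)*(c:ℂ)^2 + 8*(c:ℂ)^4)*Complex.I] + !![0, 0, (8*(c:ℂ)^2)*Complex.I, 0; 0, 0, 0, (16*(c:ℂ) + (-24)*(c:ℂ)^3)*Complex.I; (8*(c:ℂ)^2)*Complex.I, 0, 0, 0; 0, (16*(c:ℂ) + (-24)*(c:ℂ)^3)*Complex.I, 0, 0]) := by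
    simp only [smul_fin_four, add_fin_four]
    apply eq_fin_four <;> (apply Complex.ext <;> (simp [← Complex.ofReal_pow, Complex.smul_re, Complex.smul_im]; try ring))
  have mXb : (!![((-40)*(c:ℂ)^2)*Complex.I, 0, 0, 0; 0, ((-40)*(c:ℂ)^2)*Complex.I, 0, 0; 0, 0, ((-24)*(c:ℂ)^2)*Complex.I, 0; 0, 0, 0, ((-24)*(c:ℂ)^2)*Complex.I] : Matrix (Fin 4) (Fin 4) ℂ) ∈ K := by
    rw [t8]
    exact add_mem (add_mem (K.smul_mem _ mG1) (K.smul_mem _ mQ))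
      (K.smul_mem _ (add_mem (K.smul_mem _ mU) mU2))
  have t9 : ⁅(!![((-72)*(c:ℂ)^2 + 136*(c:ℂ)^4)*Complex.I, 0, 0, 0; 0, ((-104)*(c:ℂ)^2 + 168*(c:ℂ)^4)*Complex.I, 0, 0; 0, 0, ((-104)*(c:ℂ)^2 + 168*(c:ℂ)^4)*Complex.I, 0; 0, 0, 0, ((-104)*(c:ℂ)^2 + 168*(c:ℂ)^4)*Complex.I] : Matrix (Fin 4) (Fin 4) ℂ), !![0, (1)*Complex.I, 0, 0; (1)*Complex.I, 0, (1)*Complex.I, 0; 0, (1)*Complex.I, 0, ((c:ℂ))*Complex.I; 0, 0, ((c:ℂ))*Complex.I, 0]⁆ = (32*c^2*(c^2-1) : ℝ) • mA01 := by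
    try simp only [mD0, mD1, mD2, mD3, mS01, mS02, mS03, mS12, mS13, mS23, mA01, mA02, mA03, mA12, mA13, mA23]
    rw [Ring.lie_def, mul_fin_four, mul_fin_four, sub_fin_four]
    try simp only [smul_fin_four]
    apply eq_fin_four <;> (apply Complex.ext <;> (simp [← Complex.ofReal_pow, Complex.smul_re, Complex.smul_im]; try ring))
  have t10 : ⁅(!![((-40)*(c:ℂ)^2)*Complex.I, 0, 0, 0; 0, ((-40)*(c:ℂ)^2)*Complex.I, 0, 0; 0, 0, ((-24)*(c:ℂ)^2)*Complex.I, 0; 0, 0, 0, ((-24)*(c:ℂ)^2)*Complex.I] : Matrix (Fin 4) (Fin 4) ℂ), !![0, (1)*Complex.I, 0, 0; (1)*Complex.I, 0, (1)*Complex.I, 0; 0, (1)*Complex.I, 0, ((c:ℂ))*Complex.I; 0, 0, ((c:ℂ))*Complex.I, 0]⁆ = (16*c^2 : ℝ) • mA12 := by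
    try simp only [mD0, mD1, mD2, mD3, mS01, mS02, mS03, mS12, mS13, mS23, mA01, mA02, mA03, mA12, mA13, mA23]
    rw [Ring.lie_def, mul_fin_four, mul_fin_four, sub_fin_four]
    try simp only [smul_fin_four]
    apply eq_fin_four <;> (apply Complex.ext <;> (simp [← Complex.ofReal_pow, Complex.smul_re, Complex.smul_im]; try ring))
  have t11 : ⁅(mA01 : Matrix (Fin 4) (Fin 4) ℂ), !![((-72)*(c:ℂ)^2 + 136*(c:ℂ)^4)*Complex.I, 0, 0, 0; 0, ((-104)*(c:ℂ)^2 + 168*(c:ℂ)^4)*Complex.I, 0, 0; 0, 0, ((-104)*(c:ℂ)^2 + 168*(c:ℂ)^4)*Complex.I, 0; 0, 0, 0, ((-104)*(c:ℂ)^2 + 168*(c:ℂ)^4)*Complex.I]⁆ = (32*c^2*(c^2-1) : ℝ) • mS01 := by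
    try simp only [mD0, mD1, mD2, mD3, mS01, mS02, mS03, mS12, mS13, mS23, mA01, mA02, mA03, mA12, mA13, mA23]
    rw [Ring.lie_def, mul_fin_four, mul_fin_four, sub_fin_four]
    try simp only [smul_fin_four]
    apply eq_fin_four <;> (apply Complex.ext <;> (simp [← Complex.ofReal_pow, Complex.smul_re, Complex.smul_im]; try ring))
  have t12 : ⁅(mA12 : Matrix (Fin 4) (Fin 4) ℂ), !![((-40)*(c:ℂ)^2)*Complex.I, 0, 0, 0; 0, ((-40)*(c:ℂ)^2)*Complex.I, 0, 0; 0, 0, ((-24)*(c:ℂ)^2)*Complex.I, 0; 0, 0, 0, ((-24)*(c:ℂ)^2)*Complex.I]⁆ = (16*c^2 : ℝ) • mS12 := by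
    try simp only [mD0, mD1, mD2, mD3, mS01, mS02, mS03, mS12, mS13, mS23, mA01, mA02, mA03, mA12, mA13, mA23]
    rw [Ring.lie_def, mul_fin_four, mul_fin_four, sub_fin_four]
    try simp only [smul_fin_four]
    apply eq_fin_four <;> (apply Complex.ext <;> (simp [← Complex.ofReal_pow, Complex.smul_re, Complex.smul_im]; try ring))
  have mmA01 : mA01 ∈ K := by
    have h := K.smul_mem (32*c^2*(c^2-1) : ℝ)⁻¹ (t9 ▸ K.lie_mem mXa mP0)
    rwa [smul_smul, inv_mul_cancel₀ hk1, one_smul] at h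
  have mmA12 : mA12 ∈ K := by
    have h := K.smul_mem (16*c^2 : ℝ)⁻¹ (t10 ▸ K.lie_mem mXb mP0)
    rwa [smul_smul, inv_mul_cancel₀ hk2, one_smul] at h
  have mmS01 : mS01 ∈ K := by
    have h := K.smul_mem (32*c^2*(c^2-1) : ℝ)⁻¹ (t11 ▸ K.lie_mem mmA01 mXa)
    rwa [smul_smul, inv_mul_cancel₀ hk1, one_smul] at h
  have mmS12 : mS12 ∈ K := by
    have h := K.smul_mem (16*c^2 : ℝ)⁻¹ (t12 ▸ K.lie_mem mmA12 mXb)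
    rwa [smul_smul, inv_mul_cancel₀ hk2, one_smul] at h
  have t13 : c • mA23 = (!![0, 1, 0, 0; (-1), 0, 1, 0; 0, (-1), 0, (c:ℂ); 0, 0, (-1)*(c:ℂ), 0] : Matrix (Fin 4) (Fin 4) ℂ) - mA01 - mA12 := by
    try simp only [mD0, mD1, mD2, mD3, mS01, mS02, mS03, mS12, mS13, mS23, mA01, mA02, mA03, mA12, mA13, mA23]
    simp only [smul_fin_four, sub_fin_four]
    apply eq_fin_four <;> (apply Complex.ext <;> (simp [← Complex.ofReal_pow, Complex.smul_re, Complex.smul_im]; try ring))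
  have mmA23 : mA23 ∈ K := by
    have h := K.smul_mem (c : ℝ)⁻¹ (t13 ▸ sub_mem (sub_mem mP1 mmA01) mmA12)
    rwa [smul_smul, inv_mul_cancel₀ hc0, one_smul] at h
  have t14 : c • mS23 = (!![0, (1)*Complex.I, 0, 0; (1)*Complex.I, 0, (1)*Complex.I, 0; 0, (1)*Complex.I, 0, ((c:ℂ))*Complex.I; 0, 0, ((c:ℂ))*Complex.I, 0] : Matrix (Fin 4) (Fin 4) ℂ) - mS01 - mS12 := by
    try simp only [mD0, mD1, mD2, mD3, mS01, mS02, mS03, mS12, mS13, mS23, mA01, mA02, mA03, mA12, mA13, mA23]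
    simp only [smul_fin_four, sub_fin_four]
    apply eq_fin_four <;> (apply Complex.ext <;> (simp [← Complex.ofReal_pow, Complex.smul_re, Complex.smul_im]; try ring))
  have mmS23 : mS23 ∈ K := by
    have h := K.smul_mem (c : ℝ)⁻¹ (t14 ▸ sub_mem (sub_mem mP0 mmS01) mmS12)
    rwa [smul_smul, inv_mul_cancel₀ hc0, one_smul] at h
  have t15 : ⁅(mS01 : Matrix (Fin 4) (Fin 4) ℂ), mA01⁆ = !![((-2))*Complex.I, 0, 0, 0; 0, (2)*Complex.I, 0, 0; 0, 0, 0, 0; 0, 0, 0, 0] := by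
    try simp only [mD0, mD1, mD2, mD3, mS01, mS02, mS03, mS12, mS13, mS23, mA01, mA02, mA03, mA12, mA13, mA23]
    rw [Ring.lie_def, mul_fin_four, mul_fin_four, sub_fin_four]
    try simp only [smul_fin_four]
    apply eq_fin_four <;> (apply Complex.ext <;> (simp [← Complex.ofReal_pow, Complex.smul_re, Complex.smul_im]; try ring))
  have mE1 : (!![((-2))*Complex.I, 0, 0, 0; 0, (2)*Complex.I, 0, 0; 0, 0, 0, 0; 0, 0, 0, 0] : Matrix (Fin 4) (Fin 4) ℂ) ∈ K := t15 ▸ K.lie_mem mmS01 mmA01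
  have t16 : ⁅(mS12 : Matrix (Fin 4) (Fin 4) ℂ), mA12⁆ = !![0, 0, 0, 0; 0, ((-2))*Complex.I, 0, 0; 0, 0, (2)*Complex.I, 0; 0, 0, 0, 0] := by
    try simp only [mD0, mD1, mD2, mD3, mS01, mS02, mS03, mS12, mS13, mS23, mA01, mA02, mA03, mA12, mA13, mA23]
    rw [Ring.lie_def, mul_fin_four, mul_fin_four, sub_fin_four]
    try simp only [smul_fin_four]
    apply eq_fin_four <;> (apply Complex.ext <;> (simp [← Complex.ofReal_pow, Complex.smul_re, Complex.smul_im]; try ring))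
  have mE2 : (!![0, 0, 0, 0; 0, ((-2))*Complex.I, 0, 0; 0, 0, (2)*Complex.I, 0; 0, 0, 0, 0] : Matrix (Fin 4) (Fin 4) ℂ) ∈ K := t16 ▸ K.lie_mem mmS12 mmA12
  have t17 : ⁅(mS23 : Matrix (Fin 4) (Fin 4) ℂ), mA23⁆ = !![0, 0, 0, 0; 0, 0, 0, 0; 0, 0, ((-2))*Complex.I, 0; 0, 0, 0, (2)*Complex.I] := by
    try simp only [mD0, mD1, mD2, mD3, mS01, mS02, mS03, mS12, mS13, mS23, mA01, mA02, mA03, mA12, mA13, mA23]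
    rw [Ring.lie_def, mul_fin_four, mul_fin_four, sub_fin_four]
    try simp only [smul_fin_four]
    apply eq_fin_four <;> (apply Complex.ext <;> (simp [← Complex.ofReal_pow, Complex.smul_re, Complex.smul_im]; try ring))
  have mE3 : (!![0, 0, 0, 0; 0, 0, 0, 0; 0, 0, ((-2))*Complex.I, 0; 0, 0, 0, (2)*Complex.I] : Matrix (Fin 4) (Fin 4) ℂ) ∈ K := t17 ▸ K.lie_mem mmS23 mmA23
  have t18 : mD0 = (1/8 : ℝ) • (!![((1/2))*Complex.I, 0, 0, 0; 0, ((3/2))*Complex.I, 0, 0; 0, 0, ((5/2))*Complex.I, 0; 0, 0, 0, ((7/2))*Complex.I] : Matrix (Fin 4) (Fin 4) ℂ) +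
      (-15/32 : ℝ) • !![((-2))*Complex.I, 0, 0, 0; 0, (2)*Complex.I, 0, 0; 0, 0, 0, 0; 0, 0, 0, 0] + (-3/8 : ℝ) • !![0, 0, 0, 0; 0, ((-2))*Complex.I, 0, 0; 0, 0, (2)*Complex.I, 0; 0, 0, 0, 0] + (-7/32 : ℝ) • !![0, 0, 0, 0; 0, 0, 0, 0; 0, 0, ((-2))*Complex.I, 0; 0, 0, 0, (2)*Complex.I] := by
    try simp only [mD0, mD1, mD2, mD3, mS01, mS02, mS03, mS12, mS13, mS23, mA01, mA02, mA03, mA12, mA13, mA23]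
    simp only [smul_fin_four, add_fin_four]
    apply eq_fin_four <;> (apply Complex.ext <;> (simp [← Complex.ofReal_pow, Complex.smul_re, Complex.smul_im]; try ring))
  have mmD0 : mD0 ∈ K := by
    rw [t18]
    exact add_mem (add_mem (add_mem (K.smul_mem _ mG1) (K.smul_mem _ mE1)) (K.smul_mem _ mE2)) (K.smul_mem _ mE3)
  have t19 : mD1 = mD0 + (1/2 : ℝ) • (!![((-2))*Complex.I, 0, 0, 0; 0, (2)*Complex.I, 0, 0; 0, 0, 0, 0; 0, 0, 0, 0] : Matrix (Fin 4) (Fin 4) ℂ) := by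
    try simp only [mD0, mD1, mD2, mD3, mS01, mS02, mS03, mS12, mS13, mS23, mA01, mA02, mA03, mA12, mA13, mA23]
    simp only [smul_fin_four, add_fin_four]
    apply eq_fin_four <;> (apply Complex.ext <;> (simp [← Complex.ofReal_pow, Complex.smul_re, Complex.smul_im]; try ring))
  have mmD1 : mD1 ∈ K := t19 ▸ add_mem mmD0 (K.smul_mem _ mE1)
  have t20 : mD2 = mD1 + (1/2 : ℝ) • (!![0, 0, 0, 0; 0, ((-2))*Complex.I, 0, 0; 0, 0, (2)*Complex.I, 0; 0, 0, 0, 0] : Matrix (Fin 4) (Fin 4) ℂ) := by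
    try simp only [mD0, mD1, mD2, mD3, mS01, mS02, mS03, mS12, mS13, mS23, mA01, mA02, mA03, mA12, mA13, mA23]
    simp only [smul_fin_four, add_fin_four]
    apply eq_fin_four <;> (apply Complex.ext <;> (simp [← Complex.ofReal_pow, Complex.smul_re, Complex.smul_im]; try ring))
  have mmD2 : mD2 ∈ K := t20 ▸ add_mem mmD1 (K.smul_mem _ mE2)
  have t21 : mD3 = mD2 + (1/2 : ℝ) • (!![0, 0, 0, 0; 0, 0, 0, 0; 0, 0, ((-2))*Complex.I, 0; 0, 0, 0, (2)*Complex.I] : Matrix (Fin 4) (Fin 4) ℂ) := by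
    try simp only [mD0, mD1, mD2, mD3, mS01, mS02, mS03, mS12, mS13, mS23, mA01, mA02, mA03, mA12, mA13, mA23]
    simp only [smul_fin_four, add_fin_four]
    apply eq_fin_four <;> (apply Complex.ext <;> (simp [← Complex.ofReal_pow, Complex.smul_re, Complex.smul_im]; try ring))
  have mmD3 : mD3 ∈ K := t21 ▸ add_mem mmD2 (K.smul_mem _ mE3)
  have t22 : ⁅(mA01 : Matrix (Fin 4) (Fin 4) ℂ), mA12⁆ = mA02 := by
    try simp only [mD0, mD1, mD2, mD3, mS01, mS02, mS03, mS12, mS13, mS23, mA01, mA02, mA03, mA12, mA13, mA23]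
    rw [Ring.lie_def, mul_fin_four, mul_fin_four, sub_fin_four]
    try simp only [smul_fin_four]
    apply eq_fin_four <;> (apply Complex.ext <;> (simp [← Complex.ofReal_pow, Complex.smul_re, Complex.smul_im]; try ring))
  have mmA02 : mA02 ∈ K := t22 ▸ K.lie_mem mmA01 mmA12
  have t23 : ⁅(mS01 : Matrix (Fin 4) (Fin 4) ℂ), mA12⁆ = mS02 := by
    try simp only [mD0, mD1, mD2, mD3, mS01, mS02, mS03, mS12, mS13, mS23, mA01, mA02, mA03, mA12, mA13, mA23]
    rw [Ring.lie_def, mul_fin_four, mul_fin_four, sub_fin_four]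
    try simp only [smul_fin_four]
    apply eq_fin_four <;> (apply Complex.ext <;> (simp [← Complex.ofReal_pow, Complex.smul_re, Complex.smul_im]; try ring))
  have mmS02 : mS02 ∈ K := t23 ▸ K.lie_mem mmS01 mmA12
  have t24 : ⁅(mA12 : Matrix (Fin 4) (Fin 4) ℂ), mA23⁆ = mA13 := by
    try simp only [mD0, mD1, mD2, mD3, mS01, mS02, mS03, mS12, mS13, mS23, mA01, mA02, mA03, mA12, mA13, mA23]
    rw [Ring.lie_def, mul_fin_four, mul_fin_four, sub_fin_four]
    try simp only [smul_fin_four]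
    apply eq_fin_four <;> (apply Complex.ext <;> (simp [← Complex.ofReal_pow, Complex.smul_re, Complex.smul_im]; try ring))
  have mmA13 : mA13 ∈ K := t24 ▸ K.lie_mem mmA12 mmA23
  have t25 : ⁅(mS12 : Matrix (Fin 4) (Fin 4) ℂ), mA23⁆ = mS13 := by
    try simp only [mD0, mD1, mD2, mD3, mS01, mS02, mS03, mS12, mS13, mS23, mA01, mA02, mA03, mA12, mA13, mA23]
    rw [Ring.lie_def, mul_fin_four, mul_fin_four, sub_fin_four]
    try simp only [smul_fin_four]
    apply eq_fin_four <;> (apply Complex.ext <;> (simp [← Complex.ofReal_pow, Complex.smul_re, Complex.smul_im]; try ring))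
  have mmS13 : mS13 ∈ K := t25 ▸ K.lie_mem mmS12 mmA23
  have t26 : ⁅(mA01 : Matrix (Fin 4) (Fin 4) ℂ), mA13⁆ = mA03 := by
    try simp only [mD0, mD1, mD2, mD3, mS01, mS02, mS03, mS12, mS13, mS23, mA01, mA02, mA03, mA12, mA13, mA23]
    rw [Ring.lie_def, mul_fin_four, mul_fin_four, sub_fin_four]
    try simp only [smul_fin_four]
    apply eq_fin_four <;> (apply Complex.ext <;> (simp [← Complex.ofReal_pow, Complex.smul_re, Complex.smul_im]; try ring))
  have mmA03 : mA03 ∈ K := t26 ▸ K.lie_mem mmA01 mmA13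
  have t27 : ⁅(mS01 : Matrix (Fin 4) (Fin 4) ℂ), mA13⁆ = mS03 := by
    try simp only [mD0, mD1, mD2, mD3, mS01, mS02, mS03, mS12, mS13, mS23, mA01, mA02, mA03, mA12, mA13, mA23]
    rw [Ring.lie_def, mul_fin_four, mul_fin_four, sub_fin_four]
    try simp only [smul_fin_four]
    apply eq_fin_four <;> (apply Complex.ext <;> (simp [← Complex.ofReal_pow, Complex.smul_re, Complex.smul_im]; try ring))
  have mmS03 : mS03 ∈ K := t27 ▸ K.lie_mem mmS01 mmA13
  have hbmem : ∀ p : Fin 4 × Fin 4, basm p ∈ K := by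
    intro p
    fin_cases p <;>
      first
        | exact mmD0 | exact mmD1 | exact mmD2 | exact mmD3
        | exact mmS01 | exact mmS02 | exact mmS03 | exact mmS12 | exact mmS13 | exact mmS23
        | exact mmA01 | exact mmA02 | exact mmA03 | exact mmA12 | exact mmA13 | exact mmA23
  -- upper bound
  have hgen : ({Complex.I • H0, Complex.I • V'} : Set (Matrix (Fin 4) (Fin 4) ℂ)) ⊆ ↑u4 := by
    intro x hx
    rcases hx with rfl | hx
    · rw [SetLike.mem_coe, mem_u4, e0]
      ext i j
      fin_cases i <;> fin_cases j <;>
        simp [Matrix.conjTranspose_apply, Matrix.neg_apply, Complex.ext_iff,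
          Matrix.vecHead, Matrix.vecTail]
    · rw [Set.mem_singleton_iff] at hx
      subst hx
      rw [SetLike.mem_coe, mem_u4, e1]
      ext i j
      fin_cases i <;> fin_cases j <;>
        simp [Matrix.conjTranspose_apply, Matrix.neg_apply, Complex.ext_iff,
          Matrix.vecHead, Matrix.vecTail]
  have hle : K ≤ u4 := by
    rw [hK]
    exact LieSubalgebra.lieSpan_le.mpr hgen
  have hinj : Function.Injective
      (psiFun.comp (LieSubalgebra.toSubmodule K).subtype) := by
    intro x y hxy
    apply Subtype.ext
    have hx : (↑x : Matrix (Fin 4) (Fin 4) ℂ)ᴴ = -↑x := hle x.2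
    have hy : (↑y : Matrix (Fin 4) (Fin 4) ℂ)ᴴ = -↑y := hle y.2
    have hsub : ((↑x - ↑y : Matrix (Fin 4) (Fin 4) ℂ))ᴴ = -(↑x - ↑y) := by
      rw [conjTranspose_sub, hx, hy]; abel
    have hpsi : psiFun ((↑x : Matrix (Fin 4) (Fin 4) ℂ) - ↑y) = 0 := by
      rw [map_sub]
      simp only [LinearMap.comp_apply, Submodule.subtype_apply] at hxy
      rw [hxy]; abel
    have := psiFun_eq_zero hsub hpsi
    exact sub_eq_zero.mp this
  have hup : Module.finrank ℝ K ≤ 16 := by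
    have h := LinearMap.finrank_le_finrank_of_injective hinj
    rwa [Module.finrank_fintype_fun_eq_card, Fintype.card_prod, Fintype.card_fin] at h
  -- lower bound
  have hcomp : ⇑psiFun ∘ basm = fun p : Fin 4 × Fin 4 => Pi.single p (1 : ℝ) := by
    funext p q
    fin_cases p <;> fin_cases q <;>
      simp (config := { decide := true }) [Function.comp_apply, psiFun_apply, basm,
        mD0, mD1, mD2, mD3, mS01, mS02, mS03, mS12, mS13, mS23,
        mA01, mA02, mA03, mA12, mA13, mA23, Pi.single_apply, Prod.ext_iff,
        Matrix.vecHead, Matrix.vecTail]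
  have hsingles : LinearIndependent ℝ (fun p : Fin 4 × Fin 4 => Pi.single p (1 : ℝ)) := by
    have h := (Pi.basisFun ℝ (Fin 4 × Fin 4)).linearIndependent
    rwa [show ⇑(Pi.basisFun ℝ (Fin 4 × Fin 4)) = fun p : Fin 4 × Fin 4 => Pi.single p (1:ℝ)
      from funext fun p => Pi.basisFun_apply ℝ (Fin 4 × Fin 4) p] at h
  have hindep : LinearIndependent ℝ basm := by
    apply LinearIndependent.of_comp psiFun
    rw [show ⇑psiFun ∘ basm = fun p : Fin 4 × Fin 4 => Pi.single p (1:ℝ) from hcomp]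
    exact hsingles
  have hspan : Submodule.span ℝ (Set.range basm) ≤ LieSubalgebra.toSubmodule K :=
    Submodule.span_le.mpr (by rintro x ⟨p, rfl⟩; exact hbmem p)
  have hlow : 16 ≤ Module.finrank ℝ K := by
    have h3 : Module.finrank ℝ (Submodule.span ℝ (Set.range basm)) = 16 := by
      rw [finrank_span_eq_card hindep, Fintype.card_prod, Fintype.card_fin]
    have h4 := Submodule.finrank_mono hspan
    rw [h3] at h4
    exact h4
  exact le_antisymm hup hlow
end

section
/- Let A be an N×N Hermitian matrix with eigenvalues λ_1 ≥ ... ≥ λ_N and ρ a density matrix with eigenvalues w_1 ≥ ... ≥ w_N. If equality trace(Aρ) = Σ_k λ_k w_k holds and all eigenvalues of A are simple and all w_k are distinct, then there is a common orthonormal eigenbasis (ψ_k) with A ψ_k = λ_k ψ_k and ρ ψ_k = w_k ψ_k; in particular A and ρ commute. -/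
open Matrix Finset
open scoped ComplexOrder


private lemma chi_sum {N m : ℕ} (hm : m + 1 ≤ N) :
    ∑ j : Fin N, (if (j : ℕ) ≤ m then (1:ℝ) else 0) = (m + 1 : ℕ) := by
  rw [Fin.sum_univ_eq_sum_range (fun i => if i ≤ m then (1:ℝ) else 0) N]
  rw [← Finset.sum_filter]
  have : (Finset.range N).filter (fun i => i ≤ m) = Finset.range (m+1) := by
    ext i; simp [Finset.mem_filter, Finset.mem_range]; omega
  rw [this]
  simp

private lemma ds_equality {N : ℕ} (B : Fin N → Fin N → ℝ)
    (hpos : ∀ j k, 0 ≤ B j k)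
    (hrow : ∀ j, ∑ k, B j k = 1)
    (hcol : ∀ k, ∑ j, B j k = 1)
    (lam w : Fin N → ℝ) (hlam : StrictAnti lam) (hw : StrictAnti w)
    (heq : ∑ j, ∑ k, B j k * (lam j * w k) = ∑ k, lam k * w k) :
    ∀ j k, j ≠ k → B j k = 0 := by
  intro j0 k0 hjk
  have hN : 0 < N := j0.pos
  -- setup
  set E : Fin N → Fin N → ℝ := fun j k => B j k - (if j = k then 1 else 0) with hE
  set χ : Fin N → ℕ → ℝ := fun j m => if (j : ℕ) ≤ m then 1 else 0 with hχ
  have hχ01 : ∀ j m, χ j m = 0 ∨ χ j m = 1 := by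
    intro j m; by_cases h : (j:ℕ) ≤ m <;> simp [hχ, h]
  have hχnn : ∀ j m, 0 ≤ χ j m := by
    intro j m; rcases hχ01 j m with h | h <;> rw [h] <;> norm_num
  have hχle : ∀ j m, χ j m ≤ 1 := by
    intro j m; rcases hχ01 j m with h | h <;> rw [h] <;> norm_num
  set f : ℕ → ℝ := fun i => if h : i < N then lam ⟨i, h⟩ else 0 with hf
  set g : ℕ → ℝ := fun i => if h : i < N then w ⟨i, h⟩ else 0 with hg
  set a : ℕ → ℝ := fun m => f m - f (m+1) with ha
  set b : ℕ → ℝ := fun n => g n - g (n+1) with hb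
  have hapos : ∀ m ∈ Finset.range (N-1), 0 < a m := by
    intro m hm
    rw [Finset.mem_range] at hm
    have h1 : m < N := by omega
    have h2 : m + 1 < N := by omega
    have : lam ⟨m+1, h2⟩ < lam ⟨m, h1⟩ := hlam (by simp [Fin.mk_lt_mk])
    simp only [ha, hf, dif_pos h1, dif_pos h2]
    linarith
  have hbpos : ∀ n ∈ Finset.range (N-1), 0 < b n := by
    intro n hn
    rw [Finset.mem_range] at hn
    have h1 : n < N := by omega
    have h2 : n + 1 < N := by omega
    have : w ⟨n+1, h2⟩ < w ⟨n, h1⟩ := hw (by simp [Fin.mk_lt_mk])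
    simp only [hb, hg, dif_pos h1, dif_pos h2]
    linarith
  -- decomposition of lam and w
  have hdecL : ∀ j : Fin N, ∑ m ∈ Finset.range (N-1), a m * χ j m = lam j - f (N-1) := by
    intro j
    have h1 : ∀ m ∈ Finset.range (N-1), a m * χ j m = if (j:ℕ) ≤ m then a m else 0 := by
      intro m _; by_cases h : (j:ℕ) ≤ m <;> simp [hχ, h]
    rw [Finset.sum_congr rfl h1, ← Finset.sum_filter]
    have h2 : (Finset.range (N-1)).filter (fun m => (j:ℕ) ≤ m) = Finset.Ico (j:ℕ) (N-1) := by
      ext i; simp [Finset.mem_filter, Finset.mem_range, Finset.mem_Ico]; omega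
    rw [h2]
    have hj : (j:ℕ) ≤ N - 1 := by have := j.isLt; omega
    have := Finset.sum_Ico_eq_sub (fun i => f i - a i) hj
    -- telescoping: a m = f m - f (m+1)
    have htel : ∑ i ∈ Finset.Ico (j:ℕ) (N-1), a i = f (j:ℕ) - f (N-1) := by
      have := Finset.sum_Ico_eq_sub (f := fun i => -(f i)) hj
      calc ∑ i ∈ Finset.Ico (j:ℕ) (N-1), a i
          = ∑ i ∈ Finset.Ico (j:ℕ) (N-1), (-(f (i+1)) - (-(f i))) := by
            apply Finset.sum_congr rfl; intro i _; simp [ha]; ring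
        _ = -(f (N-1)) - (-(f (j:ℕ))) := by
            rw [Finset.sum_Ico_eq_sub _ hj, Finset.sum_range_sub (fun i => -(f i)),
              Finset.sum_range_sub (fun i => -(f i))]
            ring
        _ = f (j:ℕ) - f (N-1) := by ring
    rw [htel]
    simp [hf, dif_pos j.isLt]
  have hdecw : ∀ k : Fin N, ∑ n ∈ Finset.range (N-1), b n * χ k n = w k - g (N-1) := by
    intro k
    have h1 : ∀ n ∈ Finset.range (N-1), b n * χ k n = if (k:ℕ) ≤ n then b n else 0 := by
      intro n _; by_cases h : (k:ℕ) ≤ n <;> simp [hχ, h]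
    rw [Finset.sum_congr rfl h1, ← Finset.sum_filter]
    have h2 : (Finset.range (N-1)).filter (fun n => (k:ℕ) ≤ n) = Finset.Ico (k:ℕ) (N-1) := by
      ext i; simp [Finset.mem_filter, Finset.mem_range, Finset.mem_Ico]; omega
    rw [h2]
    have hk : (k:ℕ) ≤ N - 1 := by have := k.isLt; omega
    have htel : ∑ i ∈ Finset.Ico (k:ℕ) (N-1), b i = g (k:ℕ) - g (N-1) := by
      calc ∑ i ∈ Finset.Ico (k:ℕ) (N-1), b i
          = ∑ i ∈ Finset.Ico (k:ℕ) (N-1), (-(g (i+1)) - (-(g i))) := by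
            apply Finset.sum_congr rfl; intro i _; simp [hb]; ring
        _ = -(g (N-1)) - (-(g (k:ℕ))) := by
            rw [Finset.sum_Ico_eq_sub _ hk, Finset.sum_range_sub (fun i => -(g i)),
              Finset.sum_range_sub (fun i => -(g i))]
            ring
        _ = g (k:ℕ) - g (N-1) := by ring
    rw [htel]
    simp [hg, dif_pos k.isLt]
  -- row and column sums of E vanish
  have hdel_row : ∀ j : Fin N, ∑ k, (if j = k then (1:ℝ) else 0) = 1 := by
    intro j; simp
  have hdel_col : ∀ k : Fin N, ∑ j, (if j = k then (1:ℝ) else 0) = 1 := by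
    intro k; simp
  have hEr : ∀ j, ∑ k, E j k = 0 := by
    intro j; simp only [hE, Finset.sum_sub_distrib, hrow j, hdel_row j, sub_self]
  have hEc : ∀ k, ∑ j, E j k = 0 := by
    intro k; simp only [hE, Finset.sum_sub_distrib, hcol k, hdel_col k, sub_self]
  -- the difference of the trace expressions
  have hdiff : ∑ j, ∑ k, E j k * (lam j * w k) = 0 := by
    have hδ : ∑ j : Fin N, ∑ k, (if j = k then (1:ℝ) else 0) * (lam j * w k)
        = ∑ k, lam k * w k := by
      apply Finset.sum_congr rfl
      intro j _
      rw [Finset.sum_eq_single j]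
      · simp
      · intro k _ hkj; simp [Ne.symm hkj]
      · intro h; exact absurd (Finset.mem_univ j) h
    have : ∑ j, ∑ k, E j k * (lam j * w k)
        = (∑ j, ∑ k, B j k * (lam j * w k))
          - ∑ j : Fin N, ∑ k, (if j = k then (1:ℝ) else 0) * (lam j * w k) := by
      rw [← Finset.sum_sub_distrib]
      apply Finset.sum_congr rfl
      intro j _
      rw [← Finset.sum_sub_distrib]
      apply Finset.sum_congr rfl
      intro k _
      by_cases h : j = k <;> simp [hE, h] <;> ring
    rw [this, hδ, heq, sub_self]
  -- the key quadruple-sum identity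
  set S : ℕ → ℕ → ℝ := fun m n => ∑ j, ∑ k, E j k * (χ j m * χ k n) with hS
  have hkey : ∑ m ∈ Finset.range (N-1), ∑ n ∈ Finset.range (N-1), a m * b n * S m n = 0 := by
    have step1 : ∀ m ∈ Finset.range (N-1),
        ∑ n ∈ Finset.range (N-1), a m * b n * S m n
          = a m * ∑ j, χ j m * (∑ k, E j k * (w k - g (N-1))) := by
      intro m _
      have e1 : ∀ n ∈ Finset.range (N-1), a m * b n * S m n
          = a m * ∑ j, χ j m * (∑ k, E j k * (b n * χ k n)) := by
        intro n _
        simp only [hS]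
        rw [Finset.mul_sum, Finset.mul_sum]
        apply Finset.sum_congr rfl
        intro j _
        rw [Finset.mul_sum, Finset.mul_sum, Finset.mul_sum]
        apply Finset.sum_congr rfl
        intro k _
        ring
      rw [Finset.sum_congr rfl e1, ← Finset.mul_sum]
      congr 1
      rw [Finset.sum_comm]
      apply Finset.sum_congr rfl
      intro j _
      rw [← Finset.mul_sum]
      congr 1
      rw [Finset.sum_comm]
      apply Finset.sum_congr rfl
      intro k _
      rw [← Finset.mul_sum]
      congr 1
      exact hdecw k
    -- now sum over m
    have step2 : ∀ j : Fin N, ∑ k, E j k * (w k - g (N-1)) = ∑ k, E j k * w k := by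
      intro j
      have : ∑ k, E j k * (w k - g (N-1))
          = (∑ k, E j k * w k) - (∑ k, E j k) * g (N-1) := by
        rw [Finset.sum_mul, ← Finset.sum_sub_distrib]
        apply Finset.sum_congr rfl
        intro k _
        ring
      rw [this, hEr j]; ring
    have step3 : ∑ m ∈ Finset.range (N-1), ∑ n ∈ Finset.range (N-1), a m * b n * S m n
        = ∑ j, (lam j - f (N-1)) * (∑ k, E j k * w k) := by
      rw [Finset.sum_congr rfl step1]
      have e2 : ∀ m ∈ Finset.range (N-1),
          a m * ∑ j, χ j m * (∑ k, E j k * (w k - g (N-1)))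
            = ∑ j, (a m * χ j m) * (∑ k, E j k * w k) := by
        intro m _
        rw [Finset.mul_sum]
        apply Finset.sum_congr rfl
        intro j _
        rw [step2 j]
        ring
      rw [Finset.sum_congr rfl e2, Finset.sum_comm]
      apply Finset.sum_congr rfl
      intro j _
      rw [← Finset.sum_mul, hdecL j]
    have hsumD : ∑ j, ∑ k, E j k * w k = 0 := by
      rw [Finset.sum_comm]
      apply Finset.sum_eq_zero
      intro k _
      rw [← Finset.sum_mul, hEc k, zero_mul]
    have step4 : ∑ j, (lam j - f (N-1)) * (∑ k, E j k * w k)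
        = (∑ j, ∑ k, E j k * (lam j * w k)) - f (N-1) * (∑ j, ∑ k, E j k * w k) := by
      rw [Finset.mul_sum, ← Finset.sum_sub_distrib]
      apply Finset.sum_congr rfl
      intro j _
      rw [Finset.mul_sum, Finset.mul_sum, ← Finset.sum_sub_distrib]
      apply Finset.sum_congr rfl
      intro k _
      ring
    rw [step3, step4, hdiff, hsumD]
    ring
  -- termwise vanishing
  have hSnonpos : ∀ m ∈ Finset.range (N-1), ∀ n ∈ Finset.range (N-1), S m n ≤ 0 := by
    intro m hm n hn
    rw [Finset.mem_range] at hm hn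
    -- S m n = (∑∑ B χ χ) - (min m n + 1)
    have hsplit : S m n = (∑ j, ∑ k, B j k * (χ j m * χ k n))
        - ∑ j : Fin N, χ j m * χ j n := by
      simp only [hS]
      have : ∀ j : Fin N, ∑ k, E j k * (χ j m * χ k n)
          = (∑ k, B j k * (χ j m * χ k n)) - χ j m * χ j n := by
        intro j
        have : ∀ k : Fin N, E j k * (χ j m * χ k n)
            = B j k * (χ j m * χ k n) - (if j = k then χ j m * χ k n else 0) := by
          intro k
          by_cases h : j = k <;> simp [hE, h] <;> ring
        rw [Finset.sum_congr rfl (fun k _ => this k), Finset.sum_sub_distrib]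
        congr 1
        rw [Finset.sum_eq_single j]
        · simp
        · intro k _ hkj; simp [Ne.symm hkj]
        · intro h; exact absurd (Finset.mem_univ j) h
      rw [Finset.sum_congr rfl (fun j _ => this j), Finset.sum_sub_distrib]
    have hmin : ∑ j : Fin N, χ j m * χ j n = (min m n + 1 : ℕ) := by
      have : ∀ j : Fin N, χ j m * χ j n = if (j:ℕ) ≤ min m n then (1:ℝ) else 0 := by
        intro j
        by_cases h1 : (j:ℕ) ≤ m <;> by_cases h2 : (j:ℕ) ≤ n <;>
          simp [hχ, h1, h2, le_min_iff] <;> omega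
      rw [Finset.sum_congr rfl (fun j _ => this j)]
      exact chi_sum (by omega)
    rw [hsplit, hmin, sub_nonpos]
    -- bound ∑∑ B χ χ by min m n + 1
    rcases le_total m n with hmn | hmn
    · -- bound by m + 1 using row sums
      have hb1 : ∀ j : Fin N, ∑ k, B j k * (χ j m * χ k n) ≤ χ j m := by
        intro j
        calc ∑ k, B j k * (χ j m * χ k n) ≤ ∑ k, B j k * χ j m := by
              apply Finset.sum_le_sum
              intro k _
              rcases hχ01 j m with h | h <;> rcases hχ01 k n with h2 | h2 <;>
                simp [h, h2] <;> nlinarith [hpos j k]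
          _ = χ j m := by rw [← Finset.sum_mul, hrow j, one_mul]
      calc ∑ j, ∑ k, B j k * (χ j m * χ k n) ≤ ∑ j : Fin N, χ j m :=
            Finset.sum_le_sum (fun j _ => hb1 j)
        _ = (m + 1 : ℕ) := chi_sum (by omega)
        _ ≤ (min m n + 1 : ℕ) := by
            have : min m n = m := min_eq_left hmn
            rw [this]
    · -- bound by n + 1 using column sums
      have hb1 : ∀ k : Fin N, ∑ j, B j k * (χ j m * χ k n) ≤ χ k n := by
        intro k
        calc ∑ j, B j k * (χ j m * χ k n) ≤ ∑ j, B j k * χ k n := by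
              apply Finset.sum_le_sum
              intro j _
              rcases hχ01 k n with h | h <;> rcases hχ01 j m with h2 | h2 <;>
                simp [h, h2] <;> nlinarith [hpos j k]
          _ = χ k n := by rw [← Finset.sum_mul, hcol k, one_mul]
      calc ∑ j, ∑ k, B j k * (χ j m * χ k n)
            = ∑ k, ∑ j, B j k * (χ j m * χ k n) := Finset.sum_comm
        _ ≤ ∑ k : Fin N, χ k n := Finset.sum_le_sum (fun k _ => hb1 k)
        _ = (n + 1 : ℕ) := chi_sum (by omega)
        _ ≤ (min m n + 1 : ℕ) := by
            have : min m n = n := min_eq_right hmn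
            rw [this]
  have hSzero : ∀ m ∈ Finset.range (N-1), ∀ n ∈ Finset.range (N-1), S m n = 0 := by
    intro m hm n hn
    -- each term of hkey is ≤ 0 and the sum is 0
    have hterm : ∀ p ∈ (Finset.range (N-1)) ×ˢ (Finset.range (N-1)),
        (0:ℝ) ≤ -(a p.1 * b p.2 * S p.1 p.2) := by
      intro p hp
      rw [Finset.mem_product] at hp
      have h1 := hapos p.1 hp.1
      have h2 := hbpos p.2 hp.2
      have h3 := hSnonpos p.1 hp.1 p.2 hp.2
      nlinarith [mul_pos h1 h2]
    have hsum0 : ∑ p ∈ (Finset.range (N-1)) ×ˢ (Finset.range (N-1)),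
        -(a p.1 * b p.2 * S p.1 p.2) = 0 := by
      rw [Finset.sum_neg_distrib, Finset.sum_product]
      rw [hkey]
      ring
    have := (Finset.sum_eq_zero_iff_of_nonneg hterm).mp hsum0 (m, n)
      (Finset.mem_product.mpr ⟨hm, hn⟩)
    have h1 := hapos m hm
    have h2 := hbpos n hn
    have h3 : a m * b n * S m n = 0 := by
      have h9 := neg_eq_zero.mp this
      simpa using h9
    have h4 : a m * b n ≠ 0 := by positivity
    exact (mul_eq_zero.mp h3).resolve_left h4
  -- extract the conclusion
  rcases Nat.lt_or_ge (j0:ℕ) (k0:ℕ) with hlt | hge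
  · -- use row argument with m = k0 - 1
    set m : ℕ := (k0:ℕ) - 1 with hmdef
    have hk0 : 1 ≤ (k0:ℕ) := by omega
    have hmmem : m ∈ Finset.range (N-1) := by
      rw [Finset.mem_range]
      have := k0.isLt
      omega
    have hS0 := hSzero m hmmem m hmmem
    -- ∑∑ B χ χ = m+1
    have hBsum : ∑ j, ∑ k, B j k * (χ j m * χ k m) = ((m:ℝ) + 1) := by
      have hsplit : S m m = (∑ j, ∑ k, B j k * (χ j m * χ k m))
          - ∑ j : Fin N, χ j m * χ j m := by
        simp only [hS]
        have : ∀ j : Fin N, ∑ k, E j k * (χ j m * χ k m)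
            = (∑ k, B j k * (χ j m * χ k m)) - χ j m * χ j m := by
          intro j
          have h5 : ∀ k : Fin N, E j k * (χ j m * χ k m)
              = B j k * (χ j m * χ k m) - (if j = k then χ j m * χ k m else 0) := by
            intro k
            by_cases h : j = k <;> simp [hE, h] <;> ring
          rw [Finset.sum_congr rfl (fun k _ => h5 k), Finset.sum_sub_distrib]
          congr 1
          rw [Finset.sum_eq_single j]
          · simp
          · intro k _ hkj; simp [Ne.symm hkj]
          · intro h; exact absurd (Finset.mem_univ j) h
        rw [Finset.sum_congr rfl (fun j _ => this j), Finset.sum_sub_distrib]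
      have hmin : ∑ j : Fin N, χ j m * χ j m = ((m:ℝ) + 1) := by
        have : ∀ j : Fin N, χ j m * χ j m = if (j:ℕ) ≤ m then (1:ℝ) else 0 := by
          intro j; by_cases h : (j:ℕ) ≤ m <;> simp [hχ, h]
        rw [Finset.sum_congr rfl (fun j _ => this j)]
        have hm1 : m + 1 ≤ N := by rw [Finset.mem_range] at hmmem; omega
        rw [chi_sum hm1]; push_cast; ring
      have := hS0
      rw [hsplit, hmin] at this
      linarith
    have hBrow : ∑ j, ∑ k, B j k * χ j m = ((m:ℝ) + 1) := by
      have : ∀ j : Fin N, ∑ k, B j k * χ j m = χ j m := by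
        intro j; rw [← Finset.sum_mul, hrow j, one_mul]
      rw [Finset.sum_congr rfl (fun j _ => this j)]
      have hm1 : m + 1 ≤ N := by rw [Finset.mem_range] at hmmem; omega
      rw [chi_sum hm1]; push_cast; ring
    have hzero2 : ∑ j, ∑ k, B j k * χ j m * (1 - χ k m) = 0 := by
      have : ∀ j : Fin N, ∀ k : Fin N, B j k * χ j m * (1 - χ k m)
          = B j k * χ j m - B j k * (χ j m * χ k m) := by intro j k; ring
      calc ∑ j, ∑ k, B j k * χ j m * (1 - χ k m)
          = ∑ j, ∑ k, (B j k * χ j m - B j k * (χ j m * χ k m)) := by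
            apply Finset.sum_congr rfl; intro j _
            apply Finset.sum_congr rfl; intro k _
            exact this j k
        _ = (∑ j, ∑ k, B j k * χ j m) - ∑ j, ∑ k, B j k * (χ j m * χ k m) := by
            rw [← Finset.sum_sub_distrib]
            apply Finset.sum_congr rfl; intro j _
            rw [Finset.sum_sub_distrib]
        _ = 0 := by rw [hBrow, hBsum]; ring
    have hterm : ∀ p ∈ (Finset.univ ×ˢ Finset.univ : Finset (Fin N × Fin N)),
        (0:ℝ) ≤ B p.1 p.2 * χ p.1 m * (1 - χ p.2 m) := by
      intro p _
      have := hpos p.1 p.2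
      have h1 := hχnn p.1 m
      have h2 := hχle p.2 m
      have h3 : (0:ℝ) ≤ 1 - χ p.2 m := by linarith
      exact mul_nonneg (mul_nonneg this h1) h3
    have hsum0 : ∑ p ∈ (Finset.univ ×ˢ Finset.univ : Finset (Fin N × Fin N)),
        B p.1 p.2 * χ p.1 m * (1 - χ p.2 m) = 0 := by
      rw [Finset.sum_product]; exact hzero2
    have := (Finset.sum_eq_zero_iff_of_nonneg hterm).mp hsum0 (j0, k0)
      (Finset.mem_product.mpr ⟨Finset.mem_univ _, Finset.mem_univ _⟩)
    have hχj : χ j0 m = 1 := by simp only [hχ]; rw [if_pos (by omega)]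
    have hχk : χ k0 m = 0 := by simp only [hχ]; rw [if_neg (by omega)]
    rw [hχj, hχk] at this
    simpa using this
  · -- use column argument with m = j0 - 1
    have hlt' : (k0:ℕ) < (j0:ℕ) := by
      rcases Nat.lt_or_ge (k0:ℕ) (j0:ℕ) with h | h
      · exact h
      · exact absurd (Fin.ext (by omega)) hjk
    set m : ℕ := (j0:ℕ) - 1 with hmdef
    have hmmem : m ∈ Finset.range (N-1) := by
      rw [Finset.mem_range]
      have := j0.isLt
      omega
    have hS0 := hSzero m hmmem m hmmem
    have hBsum : ∑ j, ∑ k, B j k * (χ j m * χ k m) = ((m:ℝ) + 1) := by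
      have hsplit : S m m = (∑ j, ∑ k, B j k * (χ j m * χ k m))
          - ∑ j : Fin N, χ j m * χ j m := by
        simp only [hS]
        have : ∀ j : Fin N, ∑ k, E j k * (χ j m * χ k m)
            = (∑ k, B j k * (χ j m * χ k m)) - χ j m * χ j m := by
          intro j
          have h5 : ∀ k : Fin N, E j k * (χ j m * χ k m)
              = B j k * (χ j m * χ k m) - (if j = k then χ j m * χ k m else 0) := by
            intro k
            by_cases h : j = k <;> simp [hE, h] <;> ring
          rw [Finset.sum_congr rfl (fun k _ => h5 k), Finset.sum_sub_distrib]
          congr 1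
          rw [Finset.sum_eq_single j]
          · simp
          · intro k _ hkj; simp [Ne.symm hkj]
          · intro h; exact absurd (Finset.mem_univ j) h
        rw [Finset.sum_congr rfl (fun j _ => this j), Finset.sum_sub_distrib]
      have hmin : ∑ j : Fin N, χ j m * χ j m = ((m:ℝ) + 1) := by
        have : ∀ j : Fin N, χ j m * χ j m = if (j:ℕ) ≤ m then (1:ℝ) else 0 := by
          intro j; by_cases h : (j:ℕ) ≤ m <;> simp [hχ, h]
        rw [Finset.sum_congr rfl (fun j _ => this j)]
        have hm1 : m + 1 ≤ N := by rw [Finset.mem_range] at hmmem; omega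
        rw [chi_sum hm1]; push_cast; ring
      have := hS0
      rw [hsplit, hmin] at this
      linarith
    have hBcol : ∑ j, ∑ k, B j k * χ k m = ((m:ℝ) + 1) := by
      have h6 : ∑ j, ∑ k, B j k * χ k m = ∑ k : Fin N, χ k m := by
        rw [Finset.sum_comm]
        apply Finset.sum_congr rfl
        intro k _
        rw [← Finset.sum_mul, hcol k, one_mul]
      rw [h6]
      have hm1 : m + 1 ≤ N := by rw [Finset.mem_range] at hmmem; omega
      rw [chi_sum hm1]; push_cast; ring
    have hzero2 : ∑ j, ∑ k, B j k * χ k m * (1 - χ j m) = 0 := by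
      calc ∑ j, ∑ k, B j k * χ k m * (1 - χ j m)
          = ∑ j, ∑ k, (B j k * χ k m - B j k * (χ j m * χ k m)) := by
            apply Finset.sum_congr rfl; intro j _
            apply Finset.sum_congr rfl; intro k _
            ring
        _ = (∑ j, ∑ k, B j k * χ k m) - ∑ j, ∑ k, B j k * (χ j m * χ k m) := by
            rw [← Finset.sum_sub_distrib]
            apply Finset.sum_congr rfl; intro j _
            rw [Finset.sum_sub_distrib]
        _ = 0 := by rw [hBcol, hBsum]; ring
    have hterm : ∀ p ∈ (Finset.univ ×ˢ Finset.univ : Finset (Fin N × Fin N)),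
        (0:ℝ) ≤ B p.1 p.2 * χ p.2 m * (1 - χ p.1 m) := by
      intro p _
      have := hpos p.1 p.2
      have h1 := hχnn p.2 m
      have h2 := hχle p.1 m
      have h3 : (0:ℝ) ≤ 1 - χ p.1 m := by linarith
      exact mul_nonneg (mul_nonneg this h1) h3
    have hsum0 : ∑ p ∈ (Finset.univ ×ˢ Finset.univ : Finset (Fin N × Fin N)),
        B p.1 p.2 * χ p.2 m * (1 - χ p.1 m) = 0 := by
      rw [Finset.sum_product]; exact hzero2
    have := (Finset.sum_eq_zero_iff_of_nonneg hterm).mp hsum0 (j0, k0)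
      (Finset.mem_product.mpr ⟨Finset.mem_univ _, Finset.mem_univ _⟩)
    have hχk : χ k0 m = 1 := by simp only [hχ]; rw [if_pos (by omega)]
    have hχj : χ j0 m = 0 := by simp only [hχ]; rw [if_neg (by omega)]
    rw [hχj, hχk] at this
    simpa using this

/-- Necessity of the attainment condition: if the kinematical maximum is
attained and all eigenvalues of `A` and of `ρ` are simple, then `A` and `ρ`
have a common orthonormal eigenbasis (with matched ordering); in particular
they commute. -/
theorem attainment_necessity {N : ℕ}
    (A ρ : Matrix (Fin N) (Fin N) ℂ)
    (hA : A.IsHermitian) (hρ : ρ.PosSemidef) (hρtr : ρ.trace = 1)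
    (w lam : Fin N → ℝ) (hw : StrictAnti w) (hlam : StrictAnti lam)
    (Vρ : Matrix (Fin N) (Fin N) ℂ) (hVρ : Vρ ∈ Matrix.unitaryGroup (Fin N) ℂ)
    (hρeig : ρ = Vρ * Matrix.diagonal (fun k => (w k : ℂ)) * Vρᴴ)
    (VA : Matrix (Fin N) (Fin N) ℂ) (hVA : VA ∈ Matrix.unitaryGroup (Fin N) ℂ)
    (hAeig : A = VA * Matrix.diagonal (fun k => (lam k : ℂ)) * VAᴴ)
    (heq : (A * ρ).trace = ((∑ k, lam k * w k : ℝ) : ℂ)) :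
    (∃ ψ : Fin N → (Fin N → ℂ),
      (∀ j k, dotProduct (star (ψ j)) (ψ k) = if j = k then 1 else 0) ∧
      (∀ k, A.mulVec (ψ k) = (lam k : ℂ) • ψ k) ∧
      (∀ k, ρ.mulVec (ψ k) = (w k : ℂ) • ψ k)) ∧
    A * ρ = ρ * A := by
  classical
  have hVA2 : VA * VAᴴ = 1 := by
    have := Matrix.mem_unitaryGroup_iff.mp hVA
    simpa [Matrix.star_eq_conjTranspose] using this
  have hVρ1 : Vρᴴ * Vρ = 1 := by
    have := Matrix.mem_unitaryGroup_iff'.mp hVρ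
    simpa [Matrix.star_eq_conjTranspose] using this
  set U : Matrix (Fin N) (Fin N) ℂ := VAᴴ * Vρ with hUdef
  have hUmem : U ∈ Matrix.unitaryGroup (Fin N) ℂ := by
    exact mul_mem (Unitary.star_mem hVA) hVρ
  have hU1 : Uᴴ * U = 1 := by
    have := Matrix.mem_unitaryGroup_iff'.mp hUmem
    simpa [Matrix.star_eq_conjTranspose] using this
  have hU2 : U * Uᴴ = 1 := by
    have := Matrix.mem_unitaryGroup_iff.mp hUmem
    simpa [Matrix.star_eq_conjTranspose] using this
  set B : Fin N → Fin N → ℝ := fun j k => Complex.normSq (U j k) with hBdef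
  have hBpos : ∀ j k, 0 ≤ B j k := fun j k => Complex.normSq_nonneg _
  have hrowB : ∀ j, ∑ k, B j k = 1 := by
    intro j
    have h := congrArg (fun M => M j j) hU2
    simp only [Matrix.mul_apply, Matrix.conjTranspose_apply, Matrix.one_apply_eq] at h
    have h2 : ((∑ k, B j k : ℝ) : ℂ) = 1 := by
      push_cast
      rw [← h]
      apply Finset.sum_congr rfl
      intro k _
      rw [← Complex.mul_conj]
      rfl
    exact_mod_cast h2
  have hcolB : ∀ k, ∑ j, B j k = 1 := by
    intro k
    have h := congrArg (fun M => M k k) hU1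
    simp only [Matrix.mul_apply, Matrix.conjTranspose_apply, Matrix.one_apply_eq] at h
    have h2 : ((∑ j, B j k : ℝ) : ℂ) = 1 := by
      push_cast
      rw [← h]
      apply Finset.sum_congr rfl
      intro j _
      simp only [hBdef]
      rw [mul_comm, ← Complex.mul_conj]
      rfl
    exact_mod_cast h2
  -- trace computation
  have hM : VAᴴ * ρ * VA = U * Matrix.diagonal (fun k => (w k : ℂ)) * Uᴴ := by
    rw [hρeig, hUdef, Matrix.conjTranspose_mul, Matrix.conjTranspose_conjTranspose]
    simp only [Matrix.mul_assoc]
  have htr1 : (A * ρ).trace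
      = ((U * Matrix.diagonal (fun k => (w k : ℂ)) * Uᴴ)
          * Matrix.diagonal (fun k => (lam k : ℂ))).trace := by
    rw [hAeig]
    have e : VA * Matrix.diagonal (fun k => (lam k : ℂ)) * VAᴴ * ρ
        = (VA * Matrix.diagonal (fun k => (lam k : ℂ))) * (VAᴴ * ρ) := by
      simp only [Matrix.mul_assoc]
    rw [e, Matrix.trace_mul_comm]
    rw [← hM]
    congr 1
    simp only [Matrix.mul_assoc]
  have htr2 : (A * ρ).trace = ((∑ j, ∑ k, B j k * (lam j * w k) : ℝ) : ℂ) := by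
    rw [htr1, Matrix.trace]
    push_cast
    apply Finset.sum_congr rfl
    intro j _
    rw [Matrix.diag_apply, Matrix.mul_diagonal, Matrix.mul_apply, Finset.sum_mul]
    apply Finset.sum_congr rfl
    intro k _
    rw [Matrix.mul_diagonal, Matrix.conjTranspose_apply]
    have : U j k * (w k : ℂ) * star (U j k) = ((B j k : ℝ) : ℂ) * (w k : ℂ) := by
      have hc : U j k * star (U j k) = ((B j k : ℝ) : ℂ) := by
        rw [← Complex.mul_conj]; rfl
      calc U j k * (w k : ℂ) * star (U j k)
          = (U j k * star (U j k)) * (w k : ℂ) := by ring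
        _ = ((B j k : ℝ) : ℂ) * (w k : ℂ) := by rw [hc]
    rw [this]
    push_cast
    ring
  have hreq : ∑ j, ∑ k, B j k * (lam j * w k) = ∑ k, lam k * w k := by
    have := htr2.symm.trans heq
    exact_mod_cast this
  have hBoff := ds_equality B hBpos hrowB hcolB lam w hlam hw hreq
  have hUoff : ∀ j k : Fin N, j ≠ k → U j k = 0 := by
    intro j k hjk
    have := hBoff j k hjk
    exact Complex.normSq_eq_zero.mp this
  -- U is diagonal, so it commutes with diagonal matrices
  have hUdiag : U = Matrix.diagonal (fun k => U k k) := by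
    ext j k
    by_cases h : j = k
    · subst h; simp
    · rw [Matrix.diagonal_apply_ne _ h]; exact hUoff j k h
  have hcommD : U * Matrix.diagonal (fun k => (lam k : ℂ))
      = Matrix.diagonal (fun k => (lam k : ℂ)) * U := by
    rw [hUdiag, Matrix.diagonal_mul_diagonal, Matrix.diagonal_mul_diagonal]
    exact congrArg Matrix.diagonal (funext fun i => mul_comm _ _)
  have hVAU : VA * U = Vρ := by
    rw [hUdef, ← Matrix.mul_assoc, hVA2, Matrix.one_mul]
  have hAnew : A = Vρ * Matrix.diagonal (fun k => (lam k : ℂ)) * Vρᴴ := by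
    rw [← hVAU, hAeig, Matrix.conjTranspose_mul]
    calc VA * Matrix.diagonal (fun k => (lam k : ℂ)) * VAᴴ
        = VA * (Matrix.diagonal (fun k => (lam k : ℂ)) * (U * Uᴴ)) * VAᴴ := by
          rw [hU2, Matrix.mul_one]
      _ = VA * (Matrix.diagonal (fun k => (lam k : ℂ)) * U * Uᴴ) * VAᴴ := by
          simp only [Matrix.mul_assoc]
      _ = VA * (U * Matrix.diagonal (fun k => (lam k : ℂ)) * Uᴴ) * VAᴴ := by
          rw [hcommD]
      _ = VA * U * Matrix.diagonal (fun k => (lam k : ℂ)) * (Uᴴ * VAᴴ) := by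
          simp only [Matrix.mul_assoc]
  have hρV : ρ * Vρ = Vρ * Matrix.diagonal (fun k => (w k : ℂ)) := by
    rw [hρeig]
    calc Vρ * Matrix.diagonal (fun k => (w k : ℂ)) * Vρᴴ * Vρ
        = Vρ * Matrix.diagonal (fun k => (w k : ℂ)) * (Vρᴴ * Vρ) := by
          simp only [Matrix.mul_assoc]
      _ = Vρ * Matrix.diagonal (fun k => (w k : ℂ)) := by
          rw [hVρ1, Matrix.mul_one]
  have hAV : A * Vρ = Vρ * Matrix.diagonal (fun k => (lam k : ℂ)) := by
    rw [hAnew]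
    calc Vρ * Matrix.diagonal (fun k => (lam k : ℂ)) * Vρᴴ * Vρ
        = Vρ * Matrix.diagonal (fun k => (lam k : ℂ)) * (Vρᴴ * Vρ) := by
          simp only [Matrix.mul_assoc]
      _ = Vρ * Matrix.diagonal (fun k => (lam k : ℂ)) := by
          rw [hVρ1, Matrix.mul_one]
  constructor
  · refine ⟨fun k i => Vρ i k, ?_, ?_, ?_⟩
    · intro j k
      have h1 : dotProduct (star (fun i => Vρ i j)) (fun i => Vρ i k)
          = (Vρᴴ * Vρ) j k := by
        simp [dotProduct, Matrix.mul_apply, Matrix.conjTranspose_apply]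
      rw [h1, hVρ1, Matrix.one_apply]
    · intro k
      funext i
      have h1 : A.mulVec (fun i => Vρ i k) i = (A * Vρ) i k := by
        simp [Matrix.mulVec, dotProduct, Matrix.mul_apply]
      rw [h1, hAV, Matrix.mul_diagonal]
      simp [mul_comm]
    · intro k
      funext i
      have h1 : ρ.mulVec (fun i => Vρ i k) i = (ρ * Vρ) i k := by
        simp [Matrix.mulVec, dotProduct, Matrix.mul_apply]
      rw [h1, hρV, Matrix.mul_diagonal]
      simp [mul_comm]
  · have key : ∀ (D E : Fin N → ℂ),
        (Vρ * Matrix.diagonal D * Vρᴴ) * (Vρ * Matrix.diagonal E * Vρᴴ)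
          = Vρ * Matrix.diagonal (fun k => D k * E k) * Vρᴴ := by
      intro D E
      calc (Vρ * Matrix.diagonal D * Vρᴴ) * (Vρ * Matrix.diagonal E * Vρᴴ)
          = Vρ * Matrix.diagonal D * (Vρᴴ * Vρ) * (Matrix.diagonal E * Vρᴴ) := by
            simp only [Matrix.mul_assoc]
        _ = Vρ * (Matrix.diagonal D * Matrix.diagonal E) * Vρᴴ := by
            rw [hVρ1, Matrix.mul_one]
            simp only [Matrix.mul_assoc]
        _ = Vρ * Matrix.diagonal (fun k => D k * E k) * Vρᴴ := by
            rw [Matrix.diagonal_mul_diagonal]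
    rw [hAnew, hρeig, key, key]
    exact congrArg (fun D => Vρ * D * Vρᴴ)
      (congrArg Matrix.diagonal (funext fun k => mul_comm _ _))
end
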